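/- arXiv:1707.07954 — 9 statements merged into one kernel-verified Lean document; each statement's English description precedes it below -/
import Mathlib

section
/- Let (V,ρ,β) be a representation of an n-Hom-Lie algebra (g,[·,…,·]_g,α). Define a bracket on g⊕V by [x₁+u₁,…,xₙ+uₙ]_ρ = [x₁,…,xₙ]_g + Σ_{i=1}^n (−1)^{n−i} ρ(x₁,…,x̂ᵢ,…,xₙ)(uᵢ) (where x̂ᵢ means xᵢ is omitted), and define (α+β)(x+u) = α(x)+β(u). Then (g⊕V, [·,…,·]_ρ, α+β) is an n-Hom-Lie algebra (the semidirect product g⋉V). -/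
open Function Finset

/-- An alternating multilinear map `(Fin n → W) → U` (as a property of a raw function). -/
def IsAltML (K : Type*) {W U : Type*} [Field K] [AddCommGroup W] [Module K W]
    [AddCommGroup U] [Module K U] (n : ℕ) (f : (Fin n → W) → U) : Prop :=
  (∀ (x : Fin n → W) (i : Fin n) (a b : W),
      f (Function.update x i (a + b)) =
        f (Function.update x i a) + f (Function.update x i b)) ∧
  (∀ (x : Fin n → W) (i : Fin n) (c : K) (a : W),
      f (Function.update x i (c • a)) = c • f (Function.update x i a)) ∧
  (∀ (x : Fin n → W) (i j : Fin n), i ≠ j → x i = x j → f x = 0)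

/-- An `n`-Hom-Lie algebra structure (`n = m + 2`): an alternating multilinear `n`-ary
bracket and a linear automorphism `α` that is multiplicative for the bracket, such that the
Hom-Fundamental identity holds. -/
def IsNHomLie (K : Type*) {g : Type*} [Field K] [AddCommGroup g] [Module K g]
    (m : ℕ) (br : (Fin (m + 2) → g) → g) (α : g ≃ₗ[K] g) : Prop :=
  IsAltML K (m + 2) br ∧
  (∀ x : Fin (m + 2) → g, α (br x) = br (fun i => α (x i))) ∧
  (∀ (x : Fin (m + 1) → g) (y : Fin (m + 2) → g),
    br (Fin.snoc (fun i => α (x i)) (br y)) =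
      ∑ i : Fin (m + 2),
        br (Function.update (fun j => α (y j)) i (br (Fin.snoc x (y i)))))

/-- A representation of the `n`-Hom-Lie algebra `(g, br, α)` on `V` with respect to the
linear automorphism `β` (`n = m + 2`). -/
def IsRep (K : Type*) {g V : Type*} [Field K] [AddCommGroup g] [Module K g]
    [AddCommGroup V] [Module K V] (m : ℕ) (br : (Fin (m + 2) → g) → g)
    (α : g ≃ₗ[K] g) (ρ : (Fin (m + 1) → g) → Module.End K V) (β : V ≃ₗ[K] V) : Prop :=
  IsAltML K (m + 1) ρ ∧
  (∀ X : Fin (m + 1) → g,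
      ρ (fun i => α (X i)) ∘ₗ (β : V →ₗ[K] V) = (β : V →ₗ[K] V) ∘ₗ ρ X) ∧
  (∀ X Y : Fin (m + 1) → g,
      ρ (fun i => α (X i)) ∘ₗ ρ Y - ρ (fun i => α (Y i)) ∘ₗ ρ X =
        (∑ i : Fin (m + 1),
            ρ (Function.update (fun j => α (Y j)) i (br (Fin.snoc X (Y i))))) ∘ₗ
          (β : V →ₗ[K] V)) ∧
  (∀ (x : Fin m → g) (y : Fin (m + 2) → g),
      ρ (Fin.snoc (fun i => α (x i)) (br y)) ∘ₗ (β : V →ₗ[K] V) =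
        ∑ i : Fin (m + 2),
          ((-1 : K) ^ (m + (i : ℕ) + 1)) •
            (ρ (fun j => α (y (i.succAbove j))) ∘ₗ ρ (Fin.snoc x (y i))))

/-- The semidirect product bracket on `g × V` induced by a representation `ρ`:
`[x₁+u₁,…,xₙ+uₙ]_ρ = [x₁,…,xₙ]_g + Σᵢ (−1)^{n−i} ρ(x₁,…,x̂ᵢ,…,xₙ)(uᵢ)`. -/
def sdBracket {K g V : Type*} [Field K] [AddCommGroup g] [Module K g]
    [AddCommGroup V] [Module K V] (m : ℕ) (br : (Fin (m + 2) → g) → g)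
    (ρ : (Fin (m + 1) → g) → Module.End K V) : (Fin (m + 2) → g × V) → g × V :=
  fun z =>
    (br (fun i => (z i).1),
      ∑ i : Fin (m + 2),
        ((-1 : K) ^ (m + (i : ℕ) + 1)) • (ρ (fun j => (z (i.succAbove j)).1)) ((z i).2))

section FinHelpers
variable {γ : Type*}

lemma snoc_comp_succAbove_castSucc {N : ℕ} (x : Fin (N+1) → γ) (w : γ) (j : Fin (N+1)) :
    (fun p => (Fin.snoc x w : Fin (N+2) → γ) ((Fin.castSucc j).succAbove p)) =
      Fin.snoc (fun p => x (j.succAbove p)) w := by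
  funext p
  induction p using Fin.lastCases with
  | last =>
      rw [Fin.succAbove_ne_last_last (Fin.ne_of_lt (Fin.castSucc_lt_last j))]
      simp
  | cast q =>
      rw [Fin.castSucc_succAbove_castSucc]
      simp

lemma snoc_comp_succAbove_last {N : ℕ} (x : Fin (N+1) → γ) (w : γ) :
    (fun p => (Fin.snoc x w : Fin (N+2) → γ) ((Fin.last (N+1)).succAbove p)) = x := by
  funext p
  simp [Fin.succAbove_last]

lemma update_comp_succAbove_self {N : ℕ} (x : Fin (N+1) → γ) (k : Fin (N+1)) (a : γ) :
    (fun p => Function.update x k a (k.succAbove p)) = fun p => x (k.succAbove p) := by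
  funext p
  exact Function.update_of_ne (Fin.succAbove_ne k p) _ _

lemma update_comp_succAbove {N : ℕ} (x : Fin (N+1) → γ) (k : Fin (N+1)) (q : Fin N) (a : γ) :
    (fun p => Function.update x (k.succAbove q) a (k.succAbove p)) =
      Function.update (fun p => x (k.succAbove p)) q a := by
  funext p
  rcases eq_or_ne p q with h | h
  · subst h; simp
  · rw [Function.update_of_ne (fun hh => h (Fin.succAbove_right_injective hh)),
      Function.update_of_ne h]

lemma val_succAbove {N : ℕ} (k : Fin (N+1)) (p : Fin N) :
    ((k.succAbove p : Fin (N+1)) : ℕ) = if (p : ℕ) < (k : ℕ) then (p : ℕ) else (p : ℕ) + 1 := by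
  rcases lt_or_ge ((p : ℕ)) ((k : ℕ)) with h | h
  · rw [Fin.succAbove_of_castSucc_lt _ _ (by simpa [Fin.lt_iff_val_lt_val] using h)]
    simp [h]
  · rw [Fin.succAbove_of_le_castSucc _ _ (by simpa [Fin.le_iff_val_le_val] using h)]
    simp [Nat.not_lt.mpr h]

end FinHelpers

section ProdHelpers
variable {A B : Type*}


lemma update_fst {N : ℕ} (z : Fin N → A × B) (i : Fin N) (w : A × B) :
    (fun j => ((Function.update z i w) j).1) = Function.update (fun j => (z j).1) i w.1 := by
  funext j
  rcases eq_or_ne j i with h | h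
  · subst h; simp
  · rw [Function.update_of_ne h, Function.update_of_ne h]

lemma update_snd {N : ℕ} (z : Fin N → A × B) (i : Fin N) (w : A × B) :
    (fun j => ((Function.update z i w) j).2) = Function.update (fun j => (z j).2) i w.2 := by
  funext j
  rcases eq_or_ne j i with h | h
  · subst h; simp
  · rw [Function.update_of_ne h, Function.update_of_ne h]

lemma snoc_fst {N : ℕ} (z : Fin N → A × B) (w : A × B) :
    (fun j => ((Fin.snoc z w : Fin (N+1) → A × B) j).1) = Fin.snoc (fun j => (z j).1) w.1 := by
  funext j
  induction j using Fin.lastCases with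
  | last => simp
  | cast q => simp

end ProdHelpers

section Adj
variable {U W : Type*} [AddCommGroup U] [AddCommGroup W]

lemma swap_adjacent {n : ℕ} {f : (Fin n → W) → U}
    (hadd : ∀ (x : Fin n → W) (i : Fin n) (a b : W),
      f (update x i (a + b)) = f (update x i a) + f (update x i b))
    (hadj : ∀ (x : Fin n → W) (i j : Fin n), (i : ℕ) + 1 = (j : ℕ) → x i = x j → f x = 0)
    (x : Fin n → W) (i j : Fin n) (hij : (i : ℕ) + 1 = (j : ℕ)) (a b : W) :
    f (update (update x i a) j b) + f (update (update x i b) j a) = 0 := by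
  have hne : i ≠ j := by
    intro h; subst h; omega
  have key : ∀ c w, update (update x i c) j w i = c := by
    intro c w; rw [Function.update_of_ne hne, Function.update_self]
  have key2 : ∀ c w, update (update x i c) j w j = w := fun c w => Function.update_self _ _ _
  have e1 : ∀ c, f (update (update x i (a + b)) j c) =
      f (update (update x i a) j c) + f (update (update x i b) j c) := by
    intro c
    rw [Function.update_comm hne, hadd, Function.update_comm hne.symm,
      Function.update_comm hne.symm]
  have h0 : f (update (update x i (a + b)) j (a + b)) = 0 := by
    apply hadj _ i j hij
    rw [key, key2]
  rw [hadd, e1 a, e1 b] at h0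
  have z1 : f (update (update x i a) j a) = 0 := by
    apply hadj _ i j hij; rw [key, key2]
  have z2 : f (update (update x i b) j b) = 0 := by
    apply hadj _ i j hij; rw [key, key2]
  rw [z1, z2] at h0
  rw [← h0]; abel

lemma alt_of_adjacent {n : ℕ} {f : (Fin n → W) → U}
    (hadd : ∀ (x : Fin n → W) (i : Fin n) (a b : W),
      f (update x i (a + b)) = f (update x i a) + f (update x i b))
    (hadj : ∀ (x : Fin n → W) (i j : Fin n), (i : ℕ) + 1 = (j : ℕ) → x i = x j → f x = 0) :
    ∀ (x : Fin n → W) (i j : Fin n), i ≠ j → x i = x j → f x = 0 := by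
  suffices H : ∀ (d : ℕ) (x : Fin n → W) (i j : Fin n),
      (j : ℕ) = (i : ℕ) + d + 1 → x i = x j → f x = 0 by
    intro x i j hne he
    rcases Nat.lt_or_ge (i : ℕ) (j : ℕ) with h | h
    · exact H ((j : ℕ) - (i : ℕ) - 1) x i j (by omega) he
    · have hlt : (j : ℕ) < (i : ℕ) := by
        rcases Nat.lt_or_ge (j : ℕ) (i : ℕ) with h' | h'
        · exact h'
        · exact absurd (Fin.ext (le_antisymm h' h)) hne
      exact H ((i : ℕ) - (j : ℕ) - 1) x j i (by omega) he.symm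
  intro d
  induction d with
  | zero => intro x i j hji he; exact hadj x i j (by omega) he
  | succ d ih =>
    intro x i j hji he
    have hkn : (i : ℕ) + d + 1 < n := by have := j.isLt; omega
    set k : Fin n := ⟨(i : ℕ) + d + 1, hkn⟩ with hk
    have hkj : (k : ℕ) + 1 = (j : ℕ) := by simp [hk]; omega
    have hik : i ≠ k := by
      intro h; have := congrArg Fin.val h; simp [hk] at this; omega
    have hij : i ≠ j := by
      intro h; have := congrArg Fin.val h; omega
    have hkjne : k ≠ j := by
      intro h; have := congrArg Fin.val h; omega
    have hs := swap_adjacent hadd hadj x k j hkj (x k) (x j)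
    rw [Function.update_eq_self, Function.update_eq_self] at hs
    have hx' : f (update (update x k (x j)) j (x k)) = 0 := by
      apply ih _ i k (by simp [hk])
      rw [Function.update_of_ne hij, Function.update_of_ne hik,
        Function.update_of_ne hkjne, Function.update_self, ← he]
    rw [hx'] at hs
    simpa using hs

end Adj
lemma sum_offdiag {M : Type*} [AddCommGroup M] {N : ℕ} (T : Fin (N+1) → Fin (N+1) → M) :
    ∑ i : Fin (N+1), ∑ p : Fin N, T i (i.succAbove p) =
      ∑ k : Fin (N+1), ∑ p : Fin N, T (k.succAbove p) k := by
  have h1 : ∀ i, ∑ p : Fin N, T i (i.succAbove p) = (∑ k, T i k) - T i i := by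
    intro i; rw [Fin.sum_univ_succAbove (T i) i]; abel
  have h2 : ∀ k, ∑ p : Fin N, T (k.succAbove p) k = (∑ i, T i k) - T k k := by
    intro k; rw [Fin.sum_univ_succAbove (fun i => T i k) k]; abel
  simp only [h1, h2]
  rw [Finset.sum_sub_distrib, Finset.sum_sub_distrib, Finset.sum_comm]

lemma sd_FI2 {K g V : Type*} [Field K]
    [AddCommGroup g] [Module K g] [AddCommGroup V] [Module K V] (m : ℕ)
    (br : (Fin (m + 2) → g) → g) (α : g ≃ₗ[K] g)
    (ρ : (Fin (m + 1) → g) → Module.End K V) (β : V ≃ₗ[K] V)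
    (hr2 : ∀ X Y : Fin (m + 1) → g,
      ρ (fun i => α (X i)) ∘ₗ ρ Y - ρ (fun i => α (Y i)) ∘ₗ ρ X =
        (∑ i : Fin (m + 1),
            ρ (Function.update (fun j => α (Y j)) i (br (Fin.snoc X (Y i))))) ∘ₗ
          (β : V →ₗ[K] V))
    (hr3 : ∀ (x : Fin m → g) (y : Fin (m + 2) → g),
      ρ (Fin.snoc (fun i => α (x i)) (br y)) ∘ₗ (β : V →ₗ[K] V) =
        ∑ i : Fin (m + 2),
          ((-1 : K) ^ (m + (i : ℕ) + 1)) •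
            (ρ (fun j => α (y (i.succAbove j))) ∘ₗ ρ (Fin.snoc x (y i))))
    (x : Fin (m + 1) → g × V) (y : Fin (m + 2) → g × V) :
    (sdBracket m br ρ (Fin.snoc (fun i => (α.prodCongr β) (x i)) (sdBracket m br ρ y))).2 =
      ∑ i : Fin (m + 2),
        (sdBracket m br ρ (Function.update (fun j => (α.prodCongr β) (y j)) i
          (sdBracket m br ρ (Fin.snoc x (y i))))).2 := by
  have hS : ∀ z : Fin (m + 2) → g × V, (sdBracket m br ρ z).2 =
      ∑ k : Fin (m + 2), ((-1 : K) ^ (m + (k : ℕ) + 1)) •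
        (ρ (fun q => (z (k.succAbove q)).1)) ((z k).2) := fun z => rfl
  -- LHS expansion
  have HL : (sdBracket m br ρ (Fin.snoc (fun i => (α.prodCongr β) (x i)) (sdBracket m br ρ y))).2 =
      (∑ j : Fin (m + 1), ∑ k : Fin (m + 2),
        ((-1 : K) ^ (m + (j : ℕ) + 1)) • (((-1 : K) ^ (m + (k : ℕ) + 1)) •
          (ρ (fun q => α ((y (k.succAbove q)).1)))
            ((ρ (Fin.snoc (fun r => (x (j.succAbove r)).1) ((y k).1))) ((x j).2)))) +
      ∑ k : Fin (m + 2), ((-1 : K) ^ (m + (k : ℕ) + 1)) •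
        (ρ (fun j => α ((x j).1))) ((ρ (fun q => (y (k.succAbove q)).1)) ((y k).2)) := by
    rw [hS, Fin.sum_univ_castSucc]
    congr 1
    · refine Finset.sum_congr rfl fun j _ => ?_
      have harg : (fun q => ((Fin.snoc (fun i => (α.prodCongr β) (x i)) (sdBracket m br ρ y) :
            Fin (m + 2) → g × V) ((Fin.castSucc j).succAbove q)).1) =
          Fin.snoc (fun r => α ((x (j.succAbove r)).1)) (br (fun i => (y i).1)) := by
        funext q
        induction q using Fin.lastCases with
        | last =>
            rw [Fin.succAbove_ne_last_last (Fin.ne_of_lt (Fin.castSucc_lt_last j))]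
            simp [sdBracket]
        | cast r =>
            rw [Fin.castSucc_succAbove_castSucc]
            simp
      have hsnd : ((Fin.snoc (fun i => (α.prodCongr β) (x i)) (sdBracket m br ρ y) :
          Fin (m + 2) → g × V) (Fin.castSucc j)).2 = β ((x j).2) := by simp
      rw [harg, hsnd, Fin.coe_castSucc]
      have happ := LinearMap.congr_fun
        (hr3 (fun r => (x (j.succAbove r)).1) (fun i => (y i).1)) ((x j).2)
      simp only [LinearMap.comp_apply, LinearMap.coe_sum, Finset.sum_apply,
        LinearMap.smul_apply, LinearEquiv.coe_coe] at happ
      rw [happ, Finset.smul_sum]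
    · have harg2 : (fun q => ((Fin.snoc (fun i => (α.prodCongr β) (x i)) (sdBracket m br ρ y) :
          Fin (m + 2) → g × V) ((Fin.last (m + 1)).succAbove q)).1) =
          fun q => α ((x q).1) := by
        funext q
        simp [Fin.succAbove_last]
      have hsnd2 : ((Fin.snoc (fun i => (α.prodCongr β) (x i)) (sdBracket m br ρ y) :
          Fin (m + 2) → g × V) (Fin.last (m + 1))).2 =
          ∑ k : Fin (m + 2), ((-1 : K) ^ (m + (k : ℕ) + 1)) •
            (ρ (fun q => (y (k.succAbove q)).1)) ((y k).2) := by
        simp [sdBracket]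
      have hcoef : ((-1 : K) ^ (m + ((Fin.last (m + 1) : Fin (m + 2)) : ℕ) + 1)) = 1 := by
        rw [Fin.val_last, show m + (m + 1) + 1 = 2 * (m + 1) from by omega, pow_mul,
          neg_one_sq, one_pow]
      rw [harg2, hsnd2, hcoef, one_smul, map_sum]
      refine Finset.sum_congr rfl fun k _ => ?_
      rw [map_smul]
  -- RHS expansion, term by term
  have hRi : ∀ i : Fin (m + 2),
      (sdBracket m br ρ (Function.update (fun j => (α.prodCongr β) (y j)) i
        (sdBracket m br ρ (Fin.snoc x (y i))))).2 =
      ((∑ p : Fin (m + 1), ((-1 : K) ^ (m + (i : ℕ) + 1)) • (((-1 : K) ^ (m + (p : ℕ) + 1)) •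
          (ρ (fun q => α ((y (i.succAbove q)).1)))
            ((ρ (Fin.snoc (fun r => (x (p.succAbove r)).1) ((y i).1))) ((x p).2)))) +
        ((-1 : K) ^ (m + (i : ℕ) + 1)) •
          (ρ (fun q => α ((y (i.succAbove q)).1))) ((ρ (fun j => (x j).1)) ((y i).2))) +
      ∑ p : Fin (m + 1), ((-1 : K) ^ (m + ((i.succAbove p : Fin (m + 2)) : ℕ) + 1)) •
        (ρ (fun q => Function.update (fun l => α ((y l).1)) i
            (br (Fin.snoc (fun j => (x j).1) ((y i).1))) ((i.succAbove p).succAbove q)))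
          (β ((y (i.succAbove p)).2)) := by
    intro i
    rw [hS, Fin.sum_univ_succAbove _ i]
    congr 1
    · -- diagonal term
      have e1 : (fun q => ((Function.update (fun j => (α.prodCongr β) (y j)) i
            (sdBracket m br ρ (Fin.snoc x (y i)))) (i.succAbove q)).1) =
          fun q => α ((y (i.succAbove q)).1) := by
        funext q
        rw [Function.update_of_ne (Fin.succAbove_ne i q)]
        rfl
      have e2 : ((Function.update (fun j => (α.prodCongr β) (y j)) i
            (sdBracket m br ρ (Fin.snoc x (y i)))) i).2 =
          (∑ p : Fin (m + 1), ((-1 : K) ^ (m + (p : ℕ) + 1)) •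
            (ρ (Fin.snoc (fun r => (x (p.succAbove r)).1) ((y i).1))) ((x p).2)) +
          (ρ (fun j => (x j).1)) ((y i).2) := by
        rw [Function.update_self, hS, Fin.sum_univ_castSucc]
        congr 1
        · refine Finset.sum_congr rfl fun p _ => ?_
          have f1 : (fun q => ((Fin.snoc x (y i) : Fin (m + 2) → g × V)
                ((Fin.castSucc p).succAbove q)).1) =
              Fin.snoc (fun r => (x (p.succAbove r)).1) ((y i).1) := by
            funext q
            induction q using Fin.lastCases with
            | last =>
                rw [Fin.succAbove_ne_last_last (Fin.ne_of_lt (Fin.castSucc_lt_last p))]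
                simp
            | cast r =>
                rw [Fin.castSucc_succAbove_castSucc]
                simp
          rw [f1, Fin.coe_castSucc, Fin.snoc_castSucc]
        · have f2 : (fun q => ((Fin.snoc x (y i) : Fin (m + 2) → g × V)
                ((Fin.last (m + 1)).succAbove q)).1) = fun q => (x q).1 := by
            funext q
            simp [Fin.succAbove_last]
          have hc1 : ((-1 : K) ^ (m + ((Fin.last (m + 1) : Fin (m + 2)) : ℕ) + 1)) = 1 := by
            rw [Fin.val_last, show m + (m + 1) + 1 = 2 * (m + 1) from by omega, pow_mul,
              neg_one_sq, one_pow]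
          rw [f2, hc1, one_smul, Fin.snoc_last]
      rw [e1, e2, map_add, map_sum, smul_add, Finset.smul_sum]
      congr 1
      refine Finset.sum_congr rfl fun p _ => ?_
      rw [map_smul]
    · refine Finset.sum_congr rfl fun p _ => ?_
      have e3 : (fun q => ((Function.update (fun j => (α.prodCongr β) (y j)) i
            (sdBracket m br ρ (Fin.snoc x (y i)))) ((i.succAbove p).succAbove q)).1) =
          fun q => Function.update (fun l => α ((y l).1)) i
            (br (Fin.snoc (fun j => (x j).1) ((y i).1))) ((i.succAbove p).succAbove q) := by
        funext q
        rw [congrFun (update_fst (fun j => (α.prodCongr β) (y j)) i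
          (sdBracket m br ρ (Fin.snoc x (y i)))) ((i.succAbove p).succAbove q),
          show (sdBracket m br ρ (Fin.snoc x (y i))).1 =
            br (Fin.snoc (fun j => (x j).1) ((y i).1)) from congrArg br (snoc_fst x (y i))]
        rfl
      have e4 : ((Function.update (fun j => (α.prodCongr β) (y j)) i
            (sdBracket m br ρ (Fin.snoc x (y i)))) (i.succAbove p)).2 =
          β ((y (i.succAbove p)).2) := by
        rw [Function.update_of_ne (Fin.succAbove_ne i p)]
        rfl
      rw [e3, e4]
  rw [HL, Finset.sum_congr rfl fun i _ => hRi i, Finset.sum_add_distrib, Finset.sum_add_distrib]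
  have EDL : (∑ j : Fin (m + 1), ∑ k : Fin (m + 2),
        ((-1 : K) ^ (m + (j : ℕ) + 1)) • (((-1 : K) ^ (m + (k : ℕ) + 1)) •
          (ρ (fun q => α ((y (k.succAbove q)).1)))
            ((ρ (Fin.snoc (fun r => (x (j.succAbove r)).1) ((y k).1))) ((x j).2)))) =
      ∑ i : Fin (m + 2), ∑ p : Fin (m + 1),
        ((-1 : K) ^ (m + (i : ℕ) + 1)) • (((-1 : K) ^ (m + (p : ℕ) + 1)) •
          (ρ (fun q => α ((y (i.succAbove q)).1)))
            ((ρ (Fin.snoc (fun r => (x (p.succAbove r)).1) ((y i).1))) ((x p).2))) := by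
    rw [Finset.sum_comm]
    exact Finset.sum_congr rfl fun i _ => Finset.sum_congr rfl fun p _ => smul_comm _ _ _
  have ET : (∑ k : Fin (m + 2), ((-1 : K) ^ (m + (k : ℕ) + 1)) •
        (ρ (fun j => α ((x j).1))) ((ρ (fun q => (y (k.succAbove q)).1)) ((y k).2))) =
      (∑ i : Fin (m + 2), ((-1 : K) ^ (m + (i : ℕ) + 1)) •
        (ρ (fun q => α ((y (i.succAbove q)).1))) ((ρ (fun j => (x j).1)) ((y i).2))) +
      ∑ i : Fin (m + 2), ∑ p : Fin (m + 1),
        ((-1 : K) ^ (m + ((i.succAbove p : Fin (m + 2)) : ℕ) + 1)) •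
          (ρ (fun q => Function.update (fun l => α ((y l).1)) i
              (br (Fin.snoc (fun j => (x j).1) ((y i).1))) ((i.succAbove p).succAbove q)))
            (β ((y (i.succAbove p)).2)) := by
    rw [sum_offdiag (fun i k => ((-1 : K) ^ (m + (k : ℕ) + 1)) •
      (ρ (fun q => Function.update (fun l => α ((y l).1)) i
        (br (Fin.snoc (fun j => (x j).1) ((y i).1))) (k.succAbove q))) (β ((y k).2))),
      ← Finset.sum_add_distrib]
    refine Finset.sum_congr rfl fun k _ => ?_
    have hupd : ∀ p : Fin (m + 1),
        (fun q => Function.update (fun l => α ((y l).1)) (k.succAbove p)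
          (br (Fin.snoc (fun j => (x j).1) ((y (k.succAbove p)).1))) (k.succAbove q)) =
        Function.update (fun q => α ((y (k.succAbove q)).1)) p
          (br (Fin.snoc (fun j => (x j).1) ((y (k.succAbove p)).1))) :=
      fun p => update_comp_succAbove _ k p _
    simp only [hupd]
    rw [← Finset.smul_sum, ← smul_add]
    congr 1
    have happ2 := LinearMap.congr_fun
      (hr2 (fun j => (x j).1) (fun q => (y (k.succAbove q)).1)) ((y k).2)
    simp only [LinearMap.sub_apply, LinearMap.comp_apply, LinearMap.coe_sum,
      Finset.sum_apply, LinearEquiv.coe_coe] at happ2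
    rw [← happ2]
    abel
  rw [EDL, ET]
  exact (add_assoc _ _ _).symm
/-- the semidirect product `(g ⊕ V, [·,…,·]_ρ, α + β)` of an `n`-Hom-Lie
algebra by a representation `(V, ρ, β)` is an `n`-Hom-Lie algebra. -/
theorem semidirect_product_is_nHomLie {K g V : Type*} [Field K] [CharZero K]
    [AddCommGroup g] [Module K g] [AddCommGroup V] [Module K V] (m : ℕ)
    (br : (Fin (m + 2) → g) → g) (α : g ≃ₗ[K] g)
    (ρ : (Fin (m + 1) → g) → Module.End K V) (β : V ≃ₗ[K] V)
    (hg : IsNHomLie K m br α) (hρ : IsRep K m br α ρ β) :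
    IsNHomLie K m (sdBracket m br ρ) (α.prodCongr β) := by

  obtain ⟨⟨hbra, hbrs, hbralt⟩, hα, hFIg⟩ := hg
  obtain ⟨⟨hρa, hρs, hρalt⟩, hr1, hr2, hr3⟩ := hρ
  -- additivity of the semidirect bracket in each slot
  have hAdd : ∀ (z : Fin (m + 2) → g × V) (i : Fin (m + 2)) (a b : g × V),
      sdBracket m br ρ (Function.update z i (a + b)) =
        sdBracket m br ρ (Function.update z i a) + sdBracket m br ρ (Function.update z i b) := by
    intro z i a b
    unfold sdBracket
    simp only [Prod.mk_add_mk, Prod.mk.injEq]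
    constructor
    · rw [update_fst, update_fst, update_fst, Prod.fst_add, hbra]
    · rw [← Finset.sum_add_distrib]
      refine Finset.sum_congr rfl fun k _ => ?_
      rcases eq_or_ne k i with h | h
      · subst h
        have harg : ∀ w : g × V,
            (fun q => ((Function.update z k w) (k.succAbove q)).1) =
              fun q => (z (k.succAbove q)).1 := by
          intro w; funext q; rw [Function.update_of_ne (Fin.succAbove_ne k q)]
        rw [harg, harg, harg, Function.update_self, Function.update_self, Function.update_self,
          Prod.snd_add, map_add, smul_add]
      · obtain ⟨q0, hq0⟩ := Fin.exists_succAbove_eq (Ne.symm h)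
        have harg : ∀ w : g × V,
            (fun q => ((Function.update z i w) (k.succAbove q)).1) =
              Function.update (fun q => (z (k.succAbove q)).1) q0 w.1 := by
          intro w; funext q
          rcases eq_or_ne q q0 with hq | hq
          · subst hq; rw [hq0, Function.update_self, Function.update_self]
          · have hne' : k.succAbove q ≠ i := by
              rw [← hq0]; exact fun hh => hq (Fin.succAbove_right_injective hh)
            rw [Function.update_of_ne hne', Function.update_of_ne hq]
        rw [harg, harg, harg, Function.update_of_ne h, Function.update_of_ne h,
          Function.update_of_ne h, Prod.fst_add, hρa, LinearMap.add_apply, smul_add]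
  -- homogeneity of the semidirect bracket in each slot
  have hSmul : ∀ (z : Fin (m + 2) → g × V) (i : Fin (m + 2)) (c : K) (a : g × V),
      sdBracket m br ρ (Function.update z i (c • a)) =
        c • sdBracket m br ρ (Function.update z i a) := by
    intro z i c a
    unfold sdBracket
    simp only [Prod.smul_mk, Prod.mk.injEq]
    constructor
    · rw [update_fst, update_fst, Prod.smul_fst, hbrs]
    · rw [Finset.smul_sum]
      refine Finset.sum_congr rfl fun k _ => ?_
      rcases eq_or_ne k i with h | h
      · subst h
        have harg : ∀ w : g × V,
            (fun q => ((Function.update z k w) (k.succAbove q)).1) =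
              fun q => (z (k.succAbove q)).1 := by
          intro w; funext q; rw [Function.update_of_ne (Fin.succAbove_ne k q)]
        rw [harg, harg, Function.update_self, Function.update_self, Prod.smul_snd, map_smul,
          smul_comm]
      · obtain ⟨q0, hq0⟩ := Fin.exists_succAbove_eq (Ne.symm h)
        have harg : ∀ w : g × V,
            (fun q => ((Function.update z i w) (k.succAbove q)).1) =
              Function.update (fun q => (z (k.succAbove q)).1) q0 w.1 := by
          intro w; funext q
          rcases eq_or_ne q q0 with hq | hq
          · subst hq; rw [hq0, Function.update_self, Function.update_self]
          · have hne' : k.succAbove q ≠ i := by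
              rw [← hq0]; exact fun hh => hq (Fin.succAbove_right_injective hh)
            rw [Function.update_of_ne hne', Function.update_of_ne hq]
        rw [harg, harg, Function.update_of_ne h, Function.update_of_ne h, Prod.smul_fst, hρs,
          LinearMap.smul_apply, smul_comm]
  -- vanishing on tuples with two equal adjacent entries
  have hAdj : ∀ (z : Fin (m + 2) → g × V) (i j : Fin (m + 2)),
      (i : ℕ) + 1 = (j : ℕ) → z i = z j → sdBracket m br ρ z = 0 := by
    intro z i j hij he
    have hne : i ≠ j := fun h => by subst h; omega
    unfold sdBracket
    rw [Prod.mk_eq_zero]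
    constructor
    · exact hbralt _ i j hne (congrArg Prod.fst he)
    · obtain ⟨p0, hp0⟩ := Fin.exists_succAbove_eq (Ne.symm hne)
      rw [Fin.sum_univ_succAbove _ i,
        Fin.sum_univ_succAbove (fun p => ((-1 : K) ^ (m + ((i.succAbove p) : ℕ) + 1)) •
          (ρ (fun q => (z ((i.succAbove p).succAbove q)).1)) ((z (i.succAbove p)).2)) p0]
      have hrest : ∀ r : Fin m,
          ((-1 : K) ^ (m + ((i.succAbove (p0.succAbove r)) : ℕ) + 1)) •
            (ρ (fun q => (z ((i.succAbove (p0.succAbove r)).succAbove q)).1))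
              ((z (i.succAbove (p0.succAbove r))).2) = 0 := by
        intro r
        set k := i.succAbove (p0.succAbove r) with hk
        have hki : i ≠ k := (Fin.succAbove_ne i _).symm
        have hkj : j ≠ k := by
          rw [hk, ← hp0]
          intro hh
          exact Fin.succAbove_ne p0 r (Fin.succAbove_right_injective hh.symm)
        obtain ⟨q1, hq1⟩ := Fin.exists_succAbove_eq hki
        obtain ⟨q2, hq2⟩ := Fin.exists_succAbove_eq hkj
        have hq12 : q1 ≠ q2 := by
          intro hh; rw [hh, hq2] at hq1; exact hne hq1.symm
        rw [hρalt (fun q => (z (k.succAbove q)).1) q1 q2 hq12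
          (by simp only [hq1, hq2]; exact congrArg Prod.fst he), LinearMap.zero_apply, smul_zero]
      rw [Finset.sum_eq_zero fun r _ => hrest r, add_zero, hp0]
      -- the two remaining terms cancel
      have hXX : (fun q => (z (i.succAbove q)).1) = (fun q => (z (j.succAbove q)).1) := by
        funext q
        rcases Nat.lt_trichotomy (q : ℕ) (i : ℕ) with h | h | h
        · have : i.succAbove q = j.succAbove q := by
            apply Fin.ext
            rw [val_succAbove, val_succAbove, if_pos h, if_pos (show (q : ℕ) < (j : ℕ) by omega)]
          rw [this]
        · have e1 : i.succAbove q = j := by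
            apply Fin.ext
            rw [val_succAbove, if_neg (by omega)]; omega
          have e2 : j.succAbove q = i := by
            apply Fin.ext
            rw [val_succAbove, if_pos (by omega)]; omega
          rw [e1, e2, he]
        · have : i.succAbove q = j.succAbove q := by
            apply Fin.ext
            rw [val_succAbove, val_succAbove, if_neg (by omega), if_neg (by omega)]
          rw [this]
      rw [hXX, ← congrArg Prod.snd he, ← add_smul]
      have hcoef : ((-1 : K) ^ (m + (i : ℕ) + 1)) + ((-1 : K) ^ (m + (j : ℕ) + 1)) = 0 := by
        have : m + (j : ℕ) + 1 = (m + (i : ℕ) + 1) + 1 := by omega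
        rw [this, pow_succ]; ring
      rw [hcoef, zero_smul]
  refine ⟨⟨hAdd, hSmul, alt_of_adjacent hAdd hAdj⟩, ?_, ?_⟩
  · -- multiplicativity
    intro z
    unfold sdBracket
    simp only [LinearEquiv.prodCongr_apply, Prod.mk.injEq]
    constructor
    · exact hα _
    · rw [map_sum]
      refine Finset.sum_congr rfl fun k _ => ?_
      rw [map_smul]
      congr 1
      simpa using (LinearMap.congr_fun (hr1 (fun q => (z (k.succAbove q)).1)) ((z k).2)).symm
  · -- Hom-Fundamental identity
    intro x y
    refine Prod.ext ?_ ?_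
    · rw [Prod.fst_sum]
      have hZ1 : (fun i => ((Fin.snoc (fun i => (α.prodCongr β) (x i)) (sdBracket m br ρ y) :
            Fin (m + 2) → g × V) i).1) =
          Fin.snoc (fun i => α ((x i).1)) (br (fun i => (y i).1)) := by
        funext i
        induction i using Fin.lastCases with
        | last => simp [sdBracket]
        | cast q => simp
      have e1 : ∀ i : Fin (m + 2), (fun j => ((Function.update (fun j => (α.prodCongr β) (y j)) i
            (sdBracket m br ρ (Fin.snoc x (y i)))) j).1) =
          Function.update (fun j => α ((y j).1)) i
            (br (Fin.snoc (fun j => (x j).1) ((y i).1))) := by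
        intro i
        rw [update_fst, show (sdBracket m br ρ (Fin.snoc x (y i))).1 =
          br (Fin.snoc (fun j => (x j).1) ((y i).1)) from congrArg br (snoc_fst x (y i))]
        rfl
      calc (sdBracket m br ρ (Fin.snoc (fun i => (α.prodCongr β) (x i)) (sdBracket m br ρ y))).1
          = br (Fin.snoc (fun i => α ((x i).1)) (br (fun i => (y i).1))) := congrArg br hZ1
        _ = ∑ i : Fin (m + 2), br (Function.update (fun j => α ((y j).1)) i
              (br (Fin.snoc (fun j => (x j).1) ((y i).1)))) :=
            hFIg (fun j => (x j).1) (fun i => (y i).1)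
        _ = ∑ i : Fin (m + 2), (sdBracket m br ρ (Function.update (fun j => (α.prodCongr β) (y j)) i
              (sdBracket m br ρ (Fin.snoc x (y i))))).1 :=
            Finset.sum_congr rfl fun i _ => (congrArg br (e1 i)).symm
    · rw [Prod.snd_sum]
      exact sd_FI2 m br α ρ β hr2 hr3 x y
end

section
/- Let (g,[·,…,·]_g,α) be an n-Hom-Lie algebra and let D, D' be derivations of g. Then [D,D']_α = α∘D∘α⁻¹∘D'∘α⁻¹ − α∘D'∘α⁻¹∘D∘α⁻¹ is also a derivation of g. -/
open Function Finset

/-- A derivation of the `n`-Hom-Lie algebra `(g, br, α)` (`n = m + 2`): a linear map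
`D : g → g` with `D[x₁,…,xₙ] = Σᵢ [α(x₁),…,(α⁻¹∘D∘α)(xᵢ),…,α(xₙ)]`. -/
def IsDerivation {K g : Type*} [Field K] [AddCommGroup g] [Module K g] (m : ℕ)
    (br : (Fin (m + 2) → g) → g) (α : g ≃ₗ[K] g) (D : g → g) : Prop :=
  (∀ a b : g, D (a + b) = D a + D b) ∧
  (∀ (c : K) (a : g), D (c • a) = c • D a) ∧
  (∀ x : Fin (m + 2) → g,
    D (br x) =
      ∑ i : Fin (m + 2),
        br (Function.update (fun j => α (x j)) i (α.symm (D (α (x i))))))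

/-- An additive map preserves finite sums. -/
lemma addsum {M N : Type*} [AddCommMonoid M] [AddCommGroup N] (E : M → N)
    (h : ∀ a b, E (a + b) = E a + E b) {ι : Type*} (s : Finset ι) (f : ι → M) :
    E (∑ i ∈ s, f i) = ∑ i ∈ s, E (f i) :=
  map_sum (AddMonoidHom.mk' E h) f s

/-- if `D, D'` are derivations of an `n`-Hom-Lie algebra `(g, br, α)`, then
`[D,D']_α = α∘D∘α⁻¹∘D'∘α⁻¹ − α∘D'∘α⁻¹∘D∘α⁻¹` is also a derivation. -/
theorem bracket_of_derivations_isDerivation {K g : Type*} [Field K] [CharZero K]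
    [AddCommGroup g] [Module K g] (m : ℕ) (br : (Fin (m + 2) → g) → g) (α : g ≃ₗ[K] g)
    (hg : IsNHomLie K m br α) (D D' : g → g)
    (hD : IsDerivation m br α D) (hD' : IsDerivation m br α D') :
    IsDerivation m br α
      (fun a => α (D (α.symm (D' (α.symm a)))) - α (D' (α.symm (D (α.symm a))))) := by
  obtain ⟨⟨hadd, hsmul, halt⟩, hα, hFI⟩ := hg
  obtain ⟨hDa, hDs, hDbr⟩ := hD
  obtain ⟨hD'a, hD's, hD'br⟩ := hD'
  have hαs : ∀ y : Fin (m + 2) → g, α.symm (br y) = br (fun i => α.symm (y i)) := by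
    intro y
    apply α.injective
    rw [LinearEquiv.apply_symm_apply, hα]
    simp only [LinearEquiv.apply_symm_apply]
  have hupd : ∀ (w : Fin (m + 2) → g) (i : Fin (m + 2)) (a : g),
      (fun k => α (Function.update w i a k)) =
        Function.update (fun k => α (w k)) i (α a) := by
    intro w i a
    funext k
    by_cases h : k = i
    · subst h; simp
    · simp [Function.update_apply, h]
  have hsub : ∀ (w : Fin (m + 2) → g) (i : Fin (m + 2)) (a b : g),
      br (Function.update w i (a - b)) =
        br (Function.update w i a) - br (Function.update w i b) := by
    intro w i a b
    have h2 : br (Function.update w i (-b)) = -br (Function.update w i b) := by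
      have := hsmul w i (-1 : K) b
      rwa [neg_one_smul, neg_one_smul] at this
    rw [sub_eq_add_neg, hadd, h2, sub_eq_add_neg]
  refine ⟨?_, ?_, ?_⟩
  · intro a b
    simp only [map_add, hDa, hD'a]
    abel
  · intro c a
    simp only [map_smul, hDs, hD's, smul_sub]
  · intro x
    have key : ∀ E E' : g → g, (∀ a b, E (a + b) = E a + E b) →
        (∀ y : Fin (m + 2) → g, E (br y) = ∑ i : Fin (m + 2),
          br (Function.update (fun j => α (y j)) i (α.symm (E (α (y i)))))) →
        (∀ y : Fin (m + 2) → g, E' (br y) = ∑ i : Fin (m + 2),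
          br (Function.update (fun j => α (y j)) i (α.symm (E' (α (y i)))))) →
        α (E (α.symm (E' (α.symm (br x))))) =
          ∑ i : Fin (m + 2), ∑ j : Fin (m + 2),
            br (Function.update
              (fun k => α (Function.update x i (α.symm (E' (x i))) k)) j
              (E (Function.update x i (α.symm (E' (x i))) j))) := by
      intro E E' hEa hEbr hE'br
      rw [hαs, hE'br]
      simp only [LinearEquiv.apply_symm_apply]
      rw [map_sum, addsum E hEa]
      simp only [hαs]
      simp only [hEbr]
      rw [map_sum]
      apply Finset.sum_congr rfl
      intro i _
      rw [addsum (fun z => α z) (fun a b => map_add α a b)]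
      apply Finset.sum_congr rfl
      intro j _
      rw [hα]
      simp only [LinearEquiv.apply_symm_apply, hupd]
    have T1 := key D D' hDa hDbr hD'br
    have T2 := key D' D hD'a hD'br hDbr
    show α (D (α.symm (D' (α.symm (br x))))) - α (D' (α.symm (D (α.symm (br x))))) = _
    rw [T1, T2]
    have hrhs : ∀ i : Fin (m + 2),
        (α.symm (α (D (α.symm (D' (α.symm (α (x i)))))) -
          α (D' (α.symm (D (α.symm (α (x i)))))))) =
          D (α.symm (D' (x i))) - D' (α.symm (D (x i))) := by
      intro i
      simp only [map_sub, LinearEquiv.symm_apply_apply]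
    simp only [hrhs, hsub]
    rw [show (∑ i : Fin (m + 2), ∑ j : Fin (m + 2),
        br (Function.update
          (fun k => α (Function.update x i (α.symm (D (x i))) k)) j
          (D' (Function.update x i (α.symm (D (x i))) j)))) =
        ∑ i : Fin (m + 2), ∑ j : Fin (m + 2),
        br (Function.update
          (fun k => α (Function.update x j (α.symm (D (x j))) k)) i
          (D' (Function.update x j (α.symm (D (x j))) i)))
      from Finset.sum_comm]
    rw [← Finset.sum_sub_distrib]
    apply Finset.sum_congr rfl
    intro i _
    rw [← Finset.sum_sub_distrib]
    rw [Finset.sum_eq_single i]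
    · -- diagonal term
      simp only [hupd, Function.update_self, Function.update_idem,
        LinearEquiv.apply_symm_apply]
    · -- off-diagonal terms vanish
      intro j _ hj
      rw [sub_eq_zero]
      simp only [hupd, LinearEquiv.apply_symm_apply,
        Function.update_of_ne hj, Function.update_of_ne (Ne.symm hj)]
      rw [Function.update_comm hj]
    · intro h
      exact absurd (Finset.mem_univ i) h
end

section
/- Let (g,[·,…,·]_g,α) be an n-Hom-Lie algebra. Then the set Der(g) of derivations of g, equipped with the bracket [A,B]_α = α∘A∘α⁻¹∘B∘α⁻¹ − α∘B∘α⁻¹∘A∘α⁻¹ and the map Ad_α(A) = α∘A∘α⁻¹, is a regular Hom-Lie algebra (a Hom-Lie subalgebra of (gl(g),[·,·]_α,Ad_α)): Der(g) is a linear subspace of gl(g) closed under [·,·]_α and under Ad_α, Ad_α restricts to a linear automorphism of Der(g) with Ad_α([A,B]_α) = [Ad_α(A),Ad_α(B)]_α, and [Ad_α(A),[B,C]_α]_α = [[A,B]_α,Ad_α(C)]_α + [Ad_α(B),[A,C]_α]_α for all A,B,C ∈ Der(g). -/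
open Function Finset

/-- The bracket `[A,B]_α = α∘A∘α⁻¹∘B∘α⁻¹ − α∘B∘α⁻¹∘A∘α⁻¹` on maps `g → g`. -/
def derBracket {K g : Type*} [Field K] [AddCommGroup g] [Module K g] (α : g ≃ₗ[K] g)
    (A B : g → g) : g → g :=
  fun a => α (A (α.symm (B (α.symm a)))) - α (B (α.symm (A (α.symm a))))

/-- The adjoint action `Ad_α(A) = α∘A∘α⁻¹` on maps `g → g`. -/
def derAd {K g : Type*} [Field K] [AddCommGroup g] [Module K g] (α : g ≃ₗ[K] g)
    (A : g → g) : g → g :=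
  fun a => α (A (α.symm a))

set_option linter.unusedSectionVars false
section Aux

variable {K g : Type*} [Field K] [AddCommGroup g] [Module K g] {m : ℕ}
  {br : (Fin (m + 2) → g) → g} {α : g ≃ₗ[K] g}

lemma comp_update (f : g → g) (x : Fin (m + 2) → g) (i : Fin (m + 2)) (v : g) :
    (fun k => f (Function.update x i v k)) = Function.update (fun k => f (x k)) i (f v) := by
  funext k
  exact Function.apply_update (fun _ => f) x i v k

lemma upd_zero (hA : IsAltML K (m + 2) br) (x : Fin (m + 2) → g) (i : Fin (m + 2)) :
    br (Function.update x i 0) = 0 := by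
  simpa using hA.2.1 x i 0 0

lemma upd_sub (hA : IsAltML K (m + 2) br) (x : Fin (m + 2) → g) (i : Fin (m + 2))
    (a b : g) :
    br (Function.update x i (a - b)) =
      br (Function.update x i a) - br (Function.update x i b) := by
  have hneg : br (Function.update x i (-b)) = -br (Function.update x i b) := by
    simpa using hA.2.1 x i (-1 : K) b
  rw [sub_eq_add_neg, hA.1 x i a (-b), hneg, ← sub_eq_add_neg]

lemma raw_map_sum {D : g → g} (hadd : ∀ a b, D (a + b) = D a + D b)
    {ι : Type*} (s : Finset ι) (f : ι → g) :
    D (∑ i ∈ s, f i) = ∑ i ∈ s, D (f i) := by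
  exact map_sum (AddMonoidHom.mk' D hadd) f s

lemma br_symm (hg : IsNHomLie K m br α) (y : Fin (m + 2) → g) :
    α.symm (br y) = br fun i => α.symm (y i) := by
  rw [LinearEquiv.symm_apply_eq, hg.2.1]
  simp

end Aux

set_option linter.unusedSectionVars false
section Der
variable {K g : Type*} [Field K] [AddCommGroup g] [Module K g] {m : ℕ}
  {br : (Fin (m + 2) → g) → g} {α : g ≃ₗ[K] g}

lemma der_zero (hg : IsNHomLie K m br α) : IsDerivation m br α (0 : g → g) := by
  refine ⟨by simp, by simp, fun x => ?_⟩
  simp [upd_zero hg.1]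

lemma der_add {A B : g → g} (hg : IsNHomLie K m br α)
    (hA : IsDerivation m br α A) (hB : IsDerivation m br α B) :
    IsDerivation m br α (A + B) := by
  refine ⟨fun a b => ?_, fun c a => ?_, fun x => ?_⟩
  · simp [hA.1, hB.1]; abel
  · simp [hA.2.1, hB.2.1]
  · rw [Pi.add_apply, hA.2.2 x, hB.2.2 x, ← Finset.sum_add_distrib]
    refine Finset.sum_congr rfl fun i _ => ?_
    rw [Pi.add_apply, map_add]
    exact (hg.1.1 _ i _ _).symm

lemma der_smul {A : g → g} (hg : IsNHomLie K m br α) (c : K)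
    (hA : IsDerivation m br α A) : IsDerivation m br α (c • A) := by
  refine ⟨fun a b => ?_, fun c' a => ?_, fun x => ?_⟩
  · simp [hA.1]
  · simp [hA.2.1, smul_comm c c']
  · rw [Pi.smul_apply, hA.2.2 x, Finset.smul_sum]
    refine Finset.sum_congr rfl fun i _ => ?_
    rw [Pi.smul_apply, map_smul]
    exact (hg.1.2.1 _ i c _).symm

lemma der_ad {D : g → g} (hg : IsNHomLie K m br α)
    (hD : IsDerivation m br α D) : IsDerivation m br α (derAd α D) := by
  refine ⟨fun a b => by simp [derAd, map_add, hD.1], fun c a => by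
    simp [derAd, map_smul, hD.2.1], fun x => ?_⟩
  simp only [derAd]
  rw [br_symm hg x, hD.2.2]
  simp only [LinearEquiv.apply_symm_apply]
  rw [map_sum]
  refine Finset.sum_congr rfl fun i _ => ?_
  rw [hg.2.1, comp_update α]
  simp

lemma der_adinv {D : g → g} (hg : IsNHomLie K m br α)
    (hD : IsDerivation m br α D) :
    IsDerivation m br α (fun a => α.symm (D (α a))) := by
  refine ⟨fun a b => by simp [map_add, hD.1], fun c a => by
    simp [map_smul, hD.2.1], fun x => ?_⟩
  simp only
  rw [hg.2.1 x, hD.2.2]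
  rw [map_sum]
  refine Finset.sum_congr rfl fun i _ => ?_
  rw [br_symm hg, comp_update α.symm]
  simp

end Der

set_option linter.unusedSectionVars false
set_option maxHeartbeats 800000
section Der2
variable {K g : Type*} [Field K] [AddCommGroup g] [Module K g] {m : ℕ}
  {br : (Fin (m + 2) → g) → g} {α : g ≃ₗ[K] g}

/-- Expansion of `A (α⁻¹ (B (br x)))` as a double sum with diagonal/off-diagonal split. -/
lemma exp_comp {A B : g → g} (hg : IsNHomLie K m br α)
    (hA : IsDerivation m br α A) (hB : IsDerivation m br α B) (x : Fin (m + 2) → g) :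
    A (α.symm (B (br x))) =
      ∑ i : Fin (m + 2), ∑ j : Fin (m + 2),
        (if j = i then
          br (Function.update (fun k => α (x k)) i (α.symm (A (α.symm (B (α (x i)))))))
        else
          br (Function.update (Function.update (fun k => α (x k)) i (α.symm (B (α (x i))))) j
            (α.symm (A (α (x j)))))) := by
  rw [hB.2.2 x, map_sum, raw_map_sum hA.1]
  refine Finset.sum_congr rfl fun i _ => ?_
  have h1 : α.symm (br (Function.update (fun j => α (x j)) i (α.symm (B (α (x i)))))) =
      br (Function.update x i (α.symm (α.symm (B (α (x i)))))) := by
    rw [br_symm hg, comp_update α.symm]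
    simp
  rw [h1, hA.2.2]
  refine Finset.sum_congr rfl fun j _ => ?_
  have h2 : (fun k => α (Function.update x i (α.symm (α.symm (B (α (x i))))) k)) =
      Function.update (fun k => α (x k)) i (α.symm (B (α (x i)))) := by
    rw [comp_update α]
    simp
  rw [h2]
  by_cases hji : j = i
  · subst hji
    rw [if_pos rfl, Function.update_idem]
    congr 2
    rw [Function.update_self]
    simp
  · rw [if_neg hji]
    congr 2
    rw [Function.update_of_ne hji]

lemma der_comp_sub {A B : g → g} (hg : IsNHomLie K m br α)
    (hA : IsDerivation m br α A) (hB : IsDerivation m br α B) :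
    IsDerivation m br α (fun a => A (α.symm (B a)) - B (α.symm (A a))) := by
  refine ⟨fun a b => by simp only [map_add, hA.1, hB.1]; abel, fun c a => by
    simp only [map_smul, hA.2.1, hB.2.1, smul_sub], fun x => ?_⟩
  simp only
  rw [exp_comp hg hA hB x, exp_comp hg hB hA x]
  have hswap : ∀ (F : Fin (m + 2) → Fin (m + 2) → g),
      ∑ i : Fin (m + 2), ∑ j : Fin (m + 2), F i j =
        ∑ i : Fin (m + 2), ∑ j : Fin (m + 2), F j i := fun F => Finset.sum_comm
  -- rewrite the second double sum: off-diagonal terms are the transposes of the first's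
  have key : ∀ i j : Fin (m + 2), j ≠ i →
      br (Function.update (Function.update (fun k => α (x k)) i (α.symm (A (α (x i))))) j
        (α.symm (B (α (x j))))) =
      br (Function.update (Function.update (fun k => α (x k)) j (α.symm (B (α (x j))))) i
        (α.symm (A (α (x i))))) := by
    intro i j hji
    rw [Function.update_comm (Ne.symm hji)]
  calc
    (∑ i : Fin (m + 2), ∑ j : Fin (m + 2),
        (if j = i then
          br (Function.update (fun k => α (x k)) i (α.symm (A (α.symm (B (α (x i)))))))
        else
          br (Function.update (Function.update (fun k => α (x k)) i (α.symm (B (α (x i))))) j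
            (α.symm (A (α (x j))))))) -
      (∑ i : Fin (m + 2), ∑ j : Fin (m + 2),
        (if j = i then
          br (Function.update (fun k => α (x k)) i (α.symm (B (α.symm (A (α (x i)))))))
        else
          br (Function.update (Function.update (fun k => α (x k)) i (α.symm (A (α (x i))))) j
            (α.symm (B (α (x j)))))))
      = (∑ i : Fin (m + 2), ∑ j : Fin (m + 2),
        (if j = i then
          br (Function.update (fun k => α (x k)) i (α.symm (A (α.symm (B (α (x i)))))))
        else
          br (Function.update (Function.update (fun k => α (x k)) i (α.symm (B (α (x i))))) j
            (α.symm (A (α (x j))))))) -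
      (∑ i : Fin (m + 2), ∑ j : Fin (m + 2),
        (if i = j then
          br (Function.update (fun k => α (x k)) j (α.symm (B (α.symm (A (α (x j)))))))
        else
          br (Function.update (Function.update (fun k => α (x k)) i (α.symm (B (α (x i))))) j
            (α.symm (A (α (x j))))))) := by
        congr 1
        rw [hswap (fun i j =>
          (if i = j then
            br (Function.update (fun k => α (x k)) j (α.symm (B (α.symm (A (α (x j)))))))
          else
            br (Function.update (Function.update (fun k => α (x k)) i (α.symm (B (α (x i))))) j
              (α.symm (A (α (x j)))))))]
        refine Finset.sum_congr rfl fun i _ => Finset.sum_congr rfl fun j _ => ?_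
        by_cases hji : j = i
        · subst hji; simp
        · rw [if_neg hji, if_neg hji, key i j hji]
    _ = ∑ i : Fin (m + 2),
          br (Function.update (fun j => α (x j)) i
            (α.symm (A (α.symm (B (α (x i)))) - B (α.symm (A (α (x i))))))) := by
        rw [← Finset.sum_sub_distrib]
        refine Finset.sum_congr rfl fun i _ => ?_
        rw [← Finset.sum_sub_distrib, map_sub, upd_sub hg.1]
        calc
          ∑ j : Fin (m + 2),
              ((if j = i then
                br (Function.update (fun k => α (x k)) i (α.symm (A (α.symm (B (α (x i)))))))
              else
                br (Function.update (Function.update (fun k => α (x k)) i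
                  (α.symm (B (α (x i))))) j (α.symm (A (α (x j)))))) -
              (if i = j then
                br (Function.update (fun k => α (x k)) j (α.symm (B (α.symm (A (α (x j)))))))
              else
                br (Function.update (Function.update (fun k => α (x k)) i
                  (α.symm (B (α (x i))))) j (α.symm (A (α (x j)))))))
            = ∑ j : Fin (m + 2),
                (if j = i then
                  br (Function.update (fun k => α (x k)) i (α.symm (A (α.symm (B (α (x i))))))) -
                    br (Function.update (fun k => α (x k)) i (α.symm (B (α.symm (A (α (x i)))))))
                else 0) := by
              refine Finset.sum_congr rfl fun j _ => ?_
              by_cases hji : j = i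
              · subst hji; simp
              · rw [if_neg hji, if_neg (fun h => hji h.symm), sub_self, if_neg hji]
          _ = br (Function.update (fun k => α (x k)) i (α.symm (A (α.symm (B (α (x i))))))) -
                br (Function.update (fun k => α (x k)) i (α.symm (B (α.symm (A (α (x i))))))) := by
              simp
end Der2

set_option linter.unusedSectionVars false
section Der3
variable {K g : Type*} [Field K] [AddCommGroup g] [Module K g] {m : ℕ}
  {br : (Fin (m + 2) → g) → g} {α : g ≃ₗ[K] g}

lemma der_bracket {A B : g → g} (hg : IsNHomLie K m br α)
    (hA : IsDerivation m br α A) (hB : IsDerivation m br α B) :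
    IsDerivation m br α (derBracket α A B) := by
  have h := der_ad hg (der_comp_sub hg hA hB)
  have e : derAd α (fun a => A (α.symm (B a)) - B (α.symm (A a))) = derBracket α A B := by
    funext a
    simp [derAd, derBracket, map_sub]
  rwa [e] at h

lemma jacobi_lin (α : g ≃ₗ[K] g) (A B C : g →ₗ[K] g) :
    derBracket α (derAd α A) (derBracket α (B : g → g) (C : g → g)) =
      derBracket α (derBracket α (A : g → g) (B : g → g)) (derAd α C) +
        derBracket α (derAd α B) (derBracket α (A : g → g) (C : g → g)) := by
  funext a
  simp only [derBracket, derAd, Pi.add_apply, map_sub, map_add,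
    LinearEquiv.symm_apply_apply, LinearEquiv.apply_symm_apply]
  abel

end Der3


/-- the derivations of an `n`-Hom-Lie algebra `(g, br, α)` form a regular
Hom-Lie algebra `(Der(g), [·,·]_α, Ad_α)`, a Hom-Lie subalgebra of `gl(g)`: `Der(g)` is a
linear subspace closed under the bracket and under `Ad_α`, `Ad_α` restricts to a linear
automorphism of `Der(g)` multiplicative for the bracket, the bracket is skew-symmetric and
bilinear, and the Hom-Jacobi identity holds on `Der(g)`. -/
theorem derivations_form_regular_homLie {K g : Type*} [Field K] [CharZero K]
    [AddCommGroup g] [Module K g] (m : ℕ) (br : (Fin (m + 2) → g) → g) (α : g ≃ₗ[K] g)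
    (hg : IsNHomLie K m br α) :
    IsDerivation m br α (0 : g → g) ∧
    (∀ A B : g → g, IsDerivation m br α A → IsDerivation m br α B →
      IsDerivation m br α (A + B)) ∧
    (∀ (c : K) (A : g → g), IsDerivation m br α A → IsDerivation m br α (c • A)) ∧
    (∀ A B : g → g, IsDerivation m br α A → IsDerivation m br α B →
      IsDerivation m br α (derBracket α A B)) ∧
    (∀ A : g → g, IsDerivation m br α A → IsDerivation m br α (derAd α A)) ∧
    (∀ B : g → g, IsDerivation m br α B →
      ∃ A : g → g, IsDerivation m br α A ∧ derAd α A = B) ∧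
    (∀ A B : g → g, IsDerivation m br α A → IsDerivation m br α B →
      derAd α A = derAd α B → A = B) ∧
    (∀ A B : g → g, IsDerivation m br α A → IsDerivation m br α B →
      derAd α (derBracket α A B) = derBracket α (derAd α A) (derAd α B)) ∧
    (∀ A B : g → g, IsDerivation m br α A → IsDerivation m br α B →
      derBracket α A B = - derBracket α B A) ∧
    (∀ A A' B : g → g, IsDerivation m br α A → IsDerivation m br α A' →
      IsDerivation m br α B →
      derBracket α (A + A') B = derBracket α A B + derBracket α A' B) ∧
    (∀ (c : K) (A B : g → g), IsDerivation m br α A → IsDerivation m br α B →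
      derBracket α (c • A) B = c • derBracket α A B) ∧
    (∀ A B B' : g → g, IsDerivation m br α A → IsDerivation m br α B →
      IsDerivation m br α B' →
      derBracket α A (B + B') = derBracket α A B + derBracket α A B') ∧
    (∀ (c : K) (A B : g → g), IsDerivation m br α A → IsDerivation m br α B →
      derBracket α A (c • B) = c • derBracket α A B) ∧
    (∀ A B C : g → g, IsDerivation m br α A → IsDerivation m br α B →
      IsDerivation m br α C →
      derBracket α (derAd α A) (derBracket α B C) =
        derBracket α (derBracket α A B) (derAd α C) +
          derBracket α (derAd α B) (derBracket α A C)) := by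
  obtain ⟨hAlt, hmul, hFI⟩ := hg
  have hg' : IsNHomLie K m br α := ⟨hAlt, hmul, hFI⟩
  refine ⟨der_zero hg', fun A B hA hB => der_add hg' hA hB,
    fun c A hA => der_smul hg' c hA, fun A B hA hB => der_bracket hg' hA hB,
    fun A hA => der_ad hg' hA, ?_, ?_, ?_, ?_, ?_, ?_, ?_, ?_, ?_⟩
  · -- surjectivity of Ad on derivations
    intro B hB
    exact ⟨fun a => α.symm (B (α a)), der_adinv hg' hB, funext fun a => by simp [derAd]⟩
  · -- injectivity of Ad
    intro A B _ _ h
    funext a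
    have := congrFun h (α a)
    simpa [derAd] using this
  · -- Ad is multiplicative for the bracket
    intro A B _ _
    funext a
    simp [derAd, derBracket, map_sub]
  · -- skew-symmetry
    intro A B _ _
    funext a
    simp only [derBracket, Pi.neg_apply, neg_sub]
  · -- additivity in the first argument
    intro A A' B _ _ hB
    funext a
    simp only [derBracket, Pi.add_apply, map_add, hB.1]
    abel
  · -- homogeneity in the first argument
    intro c A B _ hB
    funext a
    simp only [derBracket, Pi.smul_apply, map_smul, hB.2.1, smul_sub]
  · -- additivity in the second argument
    intro A B B' hA _ _
    funext a
    simp only [derBracket, Pi.add_apply, map_add, hA.1]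
    abel
  · -- homogeneity in the second argument
    intro c A B hA _
    funext a
    simp only [derBracket, Pi.smul_apply, map_smul, hA.2.1, smul_sub]
  · -- Hom-Jacobi identity
    intro A B C hA hB hC
    exact jacobi_lin α
      ⟨⟨A, hA.1⟩, hA.2.1⟩ ⟨⟨B, hB.1⟩, hB.2.1⟩ ⟨⟨C, hC.1⟩, hC.2.1⟩
end

section
/- Let (g,[·,…,·]_g,α) be an n-Hom-Lie algebra. A linear map f : g → g satisfies, for all x₁,…,xₙ ∈ g, the 1-cocycle condition −α(f([α⁻²(x₁),…,α⁻²(xₙ)]_g)) + [x₁,…,x_{n−1},f(α⁻¹(xₙ))]_g + Σ_{i=1}^{n−1} (−1)^{n−i} [x₁,…,x̂ᵢ,…,xₙ,f(α⁻¹(xᵢ))]_g = 0 (where x̂ᵢ means xᵢ is omitted) if and only if f is a derivation of g. -/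
open Function Finset

/-- a linear map `f : g → g` is a 1-cocycle with coefficients in the adjoint
representation (i.e. `−α f([α⁻²x₁,…,α⁻²xₙ]) + [x₁,…,x_{n−1},f(α⁻¹xₙ)]
+ Σ_{i=1}^{n−1} (−1)^{n−i}[x₁,…,x̂ᵢ,…,xₙ,f(α⁻¹xᵢ)] = 0`) if and only if `f` is a
derivation of the `n`-Hom-Lie algebra `(g, br, α)`. -/
theorem one_cocycle_iff_derivation {K g : Type*} [Field K] [CharZero K]
    [AddCommGroup g] [Module K g] (m : ℕ) (br : (Fin (m + 2) → g) → g) (α : g ≃ₗ[K] g)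
    (hg : IsNHomLie K m br α) (f : g → g)
    (hadd : ∀ a b : g, f (a + b) = f a + f b)
    (hsmul : ∀ (c : K) (a : g), f (c • a) = c • f a) :
    (∀ x : Fin (m + 2) → g,
      - α (f (br (fun j => α.symm (α.symm (x j))))) +
        br (Function.update x (Fin.last (m + 1)) (f (α.symm (x (Fin.last (m + 1)))))) +
        ∑ i : Fin (m + 1),
          ((-1 : K) ^ (m + (i : ℕ) + 1)) •
            br (Fin.snoc (fun j => x ((i.castSucc).succAbove j))
              (f (α.symm (x i.castSucc)))) = 0) ↔
      IsDerivation m br α f := by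
  classical
  obtain ⟨⟨h1, h2, h3⟩, hmul, _⟩ := hg
  let F : g [⋀^Fin (m+2)]→ₗ[K] g :=
    ⟨⟨br, fun x i a b => by convert h1 x i a b, fun x i c a => by convert h2 x i c a⟩,
      fun v i j hij hne => h3 v i j hne hij⟩
  have hF : ∀ z, br z = F z := fun _ => rfl
  have key : ∀ (x : Fin (m+2) → g) (p : Fin (m+1)) (v : g),
      ((-1:K)^(m+(p:ℕ)+1)) • br (Fin.snoc (fun j => x (p.castSucc.succAbove j)) v)
        = br (Function.update x p.castSucc v) := by
    intro x p v
    set q : Fin (m+2) := p.castSucc with hq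
    set y := Function.update x q v with hy
    set c : Equiv.Perm (Fin (m+2)) := Fin.cycleRange q.rev with hc
    set τ : Equiv.Perm (Fin (m+2)) := Fin.revPerm.trans (c⁻¹.trans Fin.revPerm) with hτ
    have hτapp : ∀ j, τ j = Fin.rev (c⁻¹ (Fin.rev j)) := fun j => rfl
    have hcomp : (y ∘ τ) = Fin.snoc (fun j => x (q.succAbove j)) v := by
      funext j
      induction j using Fin.lastCases with
      | last =>
        have h0 : c q.rev = 0 := Fin.cycleRange_self _
        have : τ (Fin.last (m+1)) = q := by
          rw [hτapp]
          rw [show Fin.rev (Fin.last (m+1)) = 0 from by simp [Fin.rev_last]]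
          rw [show c⁻¹ 0 = q.rev from by rw [← h0]; exact Equiv.symm_apply_apply c q.rev]
          exact Fin.rev_rev q
        simp [Function.comp, this, hy, Function.update_self, Fin.snoc_last]
      | cast j =>
        have hcr : c (q.rev.succAbove j.rev) = j.rev.succ := Fin.cycleRange_succAbove _ _
        have : τ j.castSucc = q.succAbove j := by
          rw [hτapp]
          rw [show Fin.rev j.castSucc = j.rev.succ from Fin.rev_castSucc j]
          rw [show c⁻¹ j.rev.succ = q.rev.succAbove j.rev from by
            rw [← hcr]; exact Equiv.symm_apply_apply c _]
          rw [show Fin.rev (q.rev.succAbove j.rev) = q.succAbove j from by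
            rw [← Fin.rev_succAbove]; exact Fin.rev_rev _]
        have hne : q.succAbove j ≠ q := Fin.succAbove_ne q j
        simp only [Function.comp_apply, Fin.snoc_castSucc]
        rw [this, hy, Function.update_of_ne hne]
    have hperm := F.map_perm y τ
    rw [hcomp] at hperm
    have hsign : Equiv.Perm.sign τ = (-1)^((m+1) - (p:ℕ)) := by
      have : τ = Fin.revPerm * c⁻¹ * Fin.revPerm := rfl
      rw [this, Equiv.Perm.sign_mul, Equiv.Perm.sign_mul]
      rw [show (Equiv.Perm.sign Fin.revPerm) * (Equiv.Perm.sign c⁻¹) =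
        (Equiv.Perm.sign c⁻¹) * Equiv.Perm.sign Fin.revPerm from mul_comm _ _]
      rw [mul_assoc, Int.units_mul_self, mul_one, Equiv.Perm.sign_inv]
      rw [hc, Fin.sign_cycleRange]
      congr 1
      rw [Fin.val_rev, hq]
      simp [Fin.coe_castSucc]
    rw [hF, hF, hperm, hsign]
    rw [Units.smul_def]
    rw [show (((-1:ℤˣ)^((m+1) - (p:ℕ)) : ℤˣ) : ℤ) = (-1:ℤ)^((m+1)-(p:ℕ)) by push_cast; ring]
    rw [show ((-1:K)^(m+(p:ℕ)+1)) = (((-1:ℤ)^(m+(p:ℕ)+1) : ℤ) : K) by push_cast; ring]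
    rw [Int.cast_smul_eq_zsmul, smul_smul, ← pow_add]
    have hev : Even (m + (p:ℕ) + 1 + ((m+1) - (p:ℕ))) := by
      have := p.is_lt
      refine ⟨m+1, by omega⟩
    rw [hev.neg_one_pow, one_smul]
  -- reformulate cocycle LHS
  have hsum : ∀ x : Fin (m+2) → g,
      (- α (f (br (fun j => α.symm (α.symm (x j))))) +
        br (Function.update x (Fin.last (m + 1)) (f (α.symm (x (Fin.last (m + 1)))))) +
        ∑ i : Fin (m + 1),
          ((-1 : K) ^ (m + (i : ℕ) + 1)) •
            br (Fin.snoc (fun j => x ((i.castSucc).succAbove j))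
              (f (α.symm (x i.castSucc)))))
      = - α (f (br (fun j => α.symm (α.symm (x j))))) +
          ∑ i : Fin (m+2), br (Function.update x i (f (α.symm (x i)))) := by
    intro x
    rw [Fin.sum_univ_castSucc
      (f := fun i : Fin (m+2) => br (Function.update x i (f (α.symm (x i)))))]
    have : (∑ i : Fin (m + 1),
        ((-1 : K) ^ (m + (i : ℕ) + 1)) •
          br (Fin.snoc (fun j => x ((i.castSucc).succAbove j)) (f (α.symm (x i.castSucc)))))
        = ∑ i : Fin (m+1), br (Function.update x i.castSucc (f (α.symm (x i.castSucc)))) :=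
      Finset.sum_congr rfl (fun i _ => key x i _)
    rw [this]
    abel
  -- derivation equation reformulation
  have hder : ∀ y : Fin (m+2) → g,
      (br (fun j => α (α (y j))) = br (fun j => α (α (y j))) → True) := fun _ _ => trivial
  have happ : ∀ y : Fin (m+2) → g,
      α (∑ i : Fin (m+2), br (Function.update (fun j => α (y j)) i (α.symm (f (α (y i))))))
        = ∑ i : Fin (m+2), br (Function.update (fun j => α (α (y j))) i (f (α (y i)))) := by
    intro y
    rw [map_sum]
    refine Finset.sum_congr rfl (fun i _ => ?_)
    rw [hmul]
    congr 1
    funext j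
    rw [Function.apply_update (fun _ a => α a) (fun j => α (y j)) i (α.symm (f (α (y i)))) j]
    simp
  have hiff : ∀ y : Fin (m+2) → g,
      (f (br y) = ∑ i : Fin (m+2),
          br (Function.update (fun j => α (y j)) i (α.symm (f (α (y i)))))) ↔
      (α (f (br y)) = ∑ i : Fin (m+2),
          br (Function.update (fun j => α (α (y j))) i (f (α (y i))))) := by
    intro y
    constructor
    · intro h; rw [h, happ]
    · intro h
      apply α.injective
      rw [h, happ]
  constructor
  · intro hc
    refine ⟨hadd, hsmul, fun y => ?_⟩
    rw [hiff y]
    have h := hc (fun j => α (α (y j)))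
    rw [hsum] at h
    simp only [LinearEquiv.symm_apply_apply] at h
    exact (neg_add_eq_zero.mp h)
  · intro hd x
    have h3 := hd.2.2 (fun j => α.symm (α.symm (x j)))
    rw [hiff] at h3
    simp only [LinearEquiv.apply_symm_apply] at h3
    rw [hsum, ← h3]
    exact neg_add_cancel _
end

section
/- Let (g,ω₀,α) be an n-Hom-Lie algebra with ω₀(x₁,…,xₙ) = [x₁,…,xₙ]_g. If alternating multilinear maps ω₁,…,ω_{n−1} : gⁿ → g generate an (n−1)-order 1-parameter deformation of (g,ω₀,α), then ω₀∘ω₁ + ω₁∘ω₀ = 0, i.e. ω₁ is a 2-cocycle of (g,ω₀,α) with coefficients in the adjoint representation. -/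
open Function Finset

/-- The composition `ωᵢ∘ωⱼ` of two `n`-ary maps:
`ωᵢ∘ωⱼ(X,Y,z) = ωᵢ(ωⱼ(X,·)*Y, α(z)) − ωᵢ(α̃(X), ωⱼ(Y,z)) + ωᵢ(α̃(Y), ωⱼ(X,z))`. -/
def deformComp {K g : Type*} [Field K] [AddCommGroup g] [Module K g] (m : ℕ)
    (α : g ≃ₗ[K] g) (ωi ωj : (Fin (m + 2) → g) → g)
    (X Y : Fin (m + 1) → g) (z : g) : g :=
  (∑ l : Fin (m + 1),
      ωi (Fin.snoc (Function.update (fun s => α (Y s)) l (ωj (Fin.snoc X (Y l)))) (α z))) -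
    ωi (Fin.snoc (fun s => α (X s)) (ωj (Fin.snoc Y z))) +
    ωi (Fin.snoc (fun s => α (Y s)) (ωj (Fin.snoc X z)))

lemma altML_update_sum {K W U : Type*} [Field K] [AddCommGroup W] [Module K W]
    [AddCommGroup U] [Module K U] {n : ℕ} {f : (Fin n → W) → U} (hf : IsAltML K n f)
    (x : Fin n → W) (p : Fin n) {ι : Type*} (s : Finset ι) (c : ι → K) (v : ι → W) :
    f (Function.update x p (∑ j ∈ s, c j • v j)) =
      ∑ j ∈ s, c j • f (Function.update x p (v j)) := by
  classical
  induction s using Finset.induction with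
  | empty =>
      simp only [Finset.sum_empty]
      have h := hf.2.1 x p 0 0
      simpa using h
  | insert _ _ hj ih =>
      rw [Finset.sum_insert hj, Finset.sum_insert hj, hf.1, hf.2.1, ih]

lemma poly_vanish {K g : Type*} [Field K] [CharZero K] [AddCommGroup g] [Module K g]
    (N : ℕ) (a : ℕ → g) (h : ∀ lam : K, ∑ t ∈ Finset.range N, lam ^ t • a t = 0) :
    ∀ t < N, a t = 0 := by
  intro t ht
  rw [← Module.forall_dual_apply_eq_zero_iff K]
  intro φ
  have hp : (∑ s ∈ Finset.range N, Polynomial.monomial s (φ (a s))) = (0 : Polynomial K) := by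
    apply Polynomial.funext
    intro r
    have h2 := congrArg φ (h r)
    simp only [map_sum, map_smul, map_zero, smul_eq_mul] at h2
    simp only [Polynomial.eval_finset_sum, Polynomial.eval_monomial, Polynomial.eval_zero]
    rw [← h2]
    exact Finset.sum_congr rfl fun s _ => mul_comm _ _
  have h3 := congrArg (fun p => Polynomial.coeff p t) hp
  simp only [Polynomial.finset_sum_coeff, Polynomial.coeff_monomial,
    Polynomial.coeff_zero] at h3
  rwa [Finset.sum_ite_eq' (Finset.range N) t, if_pos (Finset.mem_range.2 ht)] at h3

/-- if `ω₁,…,ω_{n−1}` generate an `(n−1)`-order 1-parameter deformation of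
the `n`-Hom-Lie algebra `(g, ω₀, α)`, then `ω₀∘ω₁ + ω₁∘ω₀ = 0`, i.e. `ω₁` is a 2-cocycle
with coefficients in the adjoint representation. -/
theorem deformation_first_order_is_cocycle {K g : Type*} [Field K] [CharZero K]
    [AddCommGroup g] [Module K g] (m : ℕ) (br : (Fin (m + 2) → g) → g) (α : g ≃ₗ[K] g)
    (hg : IsNHomLie K m br α) (ω : Fin (m + 2) → (Fin (m + 2) → g) → g)
    (hω0 : ω 0 = br) (halt : ∀ i : Fin (m + 2), IsAltML K (m + 2) (ω i))
    (hdef : ∀ lam : K,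
      IsNHomLie K m (fun x => ∑ i : Fin (m + 2), lam ^ (i : ℕ) • ω i x) α) :
    ∀ (X Y : Fin (m + 1) → g) (z : g),
      deformComp m α (ω 0) (ω 1) X Y z + deformComp m α (ω 1) (ω 0) X Y z = 0 := by
  classical
  intro X Y z
  set y : Fin (m + 2) → g := Fin.snoc Y z with hy
  set c : Fin (m + 2) × Fin (m + 2) → g := fun p =>
    ω p.1 (Fin.snoc (fun s => α (X s)) (ω p.2 y)) -
      ∑ i : Fin (m + 2),
        ω p.1 (Function.update (fun j => α (y j)) i (ω p.2 (Fin.snoc X (y i)))) with hc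
  -- Step A : the fundamental identity for ω_lam, expanded
  have stepA : ∀ lam : K,
      ∑ p : Fin (m + 2) × Fin (m + 2), lam ^ ((p.1 : ℕ) + (p.2 : ℕ)) • c p = 0 := by
    intro lam
    have hsnoc : ∀ (A : Fin (m + 1) → g) (w : g),
        (Fin.snoc A w : Fin (m + 2) → g) =
          Function.update (Fin.snoc A (0 : g) : Fin (m + 2) → g) (Fin.last (m + 1)) w :=
      fun A w => by rw [Fin.update_snoc_last]
    have key : ∀ (k : Fin (m + 2)) (A : Fin (m + 1) → g) (v : Fin (m + 2) → g),
        ω k (Fin.snoc A (∑ j : Fin (m + 2), lam ^ (j : ℕ) • v j))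
          = ∑ j : Fin (m + 2), lam ^ (j : ℕ) • ω k (Fin.snoc A (v j)) := by
      intro k A v
      rw [hsnoc, altML_update_sum (halt k)]
      exact Finset.sum_congr rfl fun j _ => by rw [← hsnoc]
    have key2 : ∀ (k : Fin (m + 2)) (x0 : Fin (m + 2) → g) (i : Fin (m + 2))
        (v : Fin (m + 2) → g),
        ω k (Function.update x0 i (∑ j : Fin (m + 2), lam ^ (j : ℕ) • v j))
          = ∑ j : Fin (m + 2), lam ^ (j : ℕ) • ω k (Function.update x0 i (v j)) :=
      fun k x0 i v => altML_update_sum (halt k) x0 i Finset.univ _ v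
    have hFI := (hdef lam).2.2 X y
    simp only at hFI
    simp only [key, key2] at hFI
    have hFI' : (∑ k : Fin (m + 2), ∑ j : Fin (m + 2), (lam ^ (k : ℕ) * lam ^ (j : ℕ)) •
          ω k (Fin.snoc (fun i => α (X i)) (ω j y)))
        = ∑ i : Fin (m + 2), ∑ k : Fin (m + 2), ∑ j : Fin (m + 2),
            (lam ^ (k : ℕ) * lam ^ (j : ℕ)) •
              ω k (Function.update (fun s => α (y s)) i (ω j (Fin.snoc X (y i)))) := by
      simpa only [Finset.smul_sum, smul_smul] using hFI
    have swap : ∀ F : Fin (m + 2) → Fin (m + 2) → Fin (m + 2) → g,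
        (∑ i : Fin (m + 2), ∑ k : Fin (m + 2), ∑ j : Fin (m + 2), F i k j)
          = ∑ k : Fin (m + 2), ∑ j : Fin (m + 2), ∑ i : Fin (m + 2), F i k j := by
      intro F
      rw [Finset.sum_comm]
      exact Finset.sum_congr rfl fun k _ => Finset.sum_comm
    rw [Fintype.sum_prod_type]
    simp only [hc]
    simp only [smul_sub, pow_add, Finset.smul_sum, smul_smul, Finset.sum_sub_distrib]
    rw [sub_eq_zero, hFI', swap]
  -- Step B : regroup by total degree
  have stepB : ∀ lam : K, ∑ t ∈ Finset.range (2 * m + 3), lam ^ t •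
      (∑ p ∈ Finset.univ.filter
          (fun p : Fin (m + 2) × Fin (m + 2) => (p.1 : ℕ) + (p.2 : ℕ) = t), c p) = 0 := by
    intro lam
    have hmaps : ∀ p : Fin (m + 2) × Fin (m + 2), p ∈ (Finset.univ : Finset _) →
        (p.1 : ℕ) + (p.2 : ℕ) ∈ Finset.range (2 * m + 3) := fun p _ =>
      Finset.mem_range.2 (by have h1 := p.1.isLt; have h2 := p.2.isLt; omega)
    calc ∑ t ∈ Finset.range (2 * m + 3), lam ^ t •
        (∑ p ∈ Finset.univ.filter
            (fun p : Fin (m + 2) × Fin (m + 2) => (p.1 : ℕ) + (p.2 : ℕ) = t), c p)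
        = ∑ t ∈ Finset.range (2 * m + 3), ∑ p ∈ Finset.univ.filter
            (fun p : Fin (m + 2) × Fin (m + 2) => (p.1 : ℕ) + (p.2 : ℕ) = t),
              lam ^ ((p.1 : ℕ) + (p.2 : ℕ)) • c p := by
          refine Finset.sum_congr rfl fun t _ => ?_
          rw [Finset.smul_sum]
          exact Finset.sum_congr rfl fun p hp => by rw [(Finset.mem_filter.1 hp).2]
      _ = ∑ p : Fin (m + 2) × Fin (m + 2), lam ^ ((p.1 : ℕ) + (p.2 : ℕ)) • c p :=
          Finset.sum_fiberwise_of_maps_to hmaps _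
      _ = 0 := stepA lam
  have hcoef := poly_vanish (2 * m + 3)
    (fun t => ∑ p ∈ Finset.univ.filter
        (fun p : Fin (m + 2) × Fin (m + 2) => (p.1 : ℕ) + (p.2 : ℕ) = t), c p)
    stepB 1 (by omega)
  -- Step C : identify the degree-1 fiber
  have hfilter : Finset.univ.filter
      (fun p : Fin (m + 2) × Fin (m + 2) => (p.1 : ℕ) + (p.2 : ℕ) = 1)
      = {((0 : Fin (m + 2)), (1 : Fin (m + 2))), ((1 : Fin (m + 2)), (0 : Fin (m + 2)))} := by
    ext p
    simp only [Finset.mem_filter, Finset.mem_univ, true_and, Finset.mem_insert,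
      Finset.mem_singleton, Prod.ext_iff]
    constructor
    · intro h
      have h01 : ((p.1 : ℕ) = 0 ∧ (p.2 : ℕ) = 1) ∨ ((p.1 : ℕ) = 1 ∧ (p.2 : ℕ) = 0) := by omega
      rcases h01 with ⟨h1, h2⟩ | ⟨h1, h2⟩
      · left
        exact ⟨Fin.ext (by simp [h1]), Fin.ext (by simp [h2])⟩
      · right
        exact ⟨Fin.ext (by simp [h1]), Fin.ext (by simp [h2])⟩
    · rintro (⟨h1, h2⟩ | ⟨h1, h2⟩) <;> simp [h1, h2]
  rw [hfilter] at hcoef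
  have hne : ((0 : Fin (m + 2)), (1 : Fin (m + 2))) ≠ ((1 : Fin (m + 2)), (0 : Fin (m + 2))) := by
    simp [Prod.ext_iff, Fin.ext_iff]
  rw [Finset.sum_insert (by simpa using hne), Finset.sum_singleton] at hcoef
  -- Step D : relate c to deformComp
  have hD : ∀ i j : Fin (m + 2),
      c (i, j) = - deformComp m α (ω i) (ω j) X Y z := by
    intro i j
    have hαy : (fun s => α (y s)) = Fin.snoc (fun s => α (Y s)) (α z) := by
      funext s
      refine Fin.lastCases ?_ ?_ s
      · simp [hy]
      · intro l; simp [hy]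
    have hterm : ∀ l : Fin (m + 1),
        ω i (Function.update (fun s => α (y s)) l.castSucc (ω j (Fin.snoc X (y l.castSucc))))
          = ω i (Fin.snoc (Function.update (fun s => α (Y s)) l (ω j (Fin.snoc X (Y l))))
              (α z)) := by
      intro l
      rw [hαy]
      rw [show y l.castSucc = Y l from Fin.snoc_castSucc _ _ _]
      rw [Fin.snoc_update]
    have hlast :
        ω i (Function.update (fun s => α (y s)) (Fin.last (m + 1))
            (ω j (Fin.snoc X (y (Fin.last (m + 1))))))
          = ω i (Fin.snoc (fun s => α (Y s)) (ω j (Fin.snoc X z))) := by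
      rw [hαy]
      rw [show y (Fin.last (m + 1)) = z from Fin.snoc_last _ _]
      rw [Fin.update_snoc_last]
    simp only [hc, deformComp]
    rw [Fin.sum_univ_castSucc]
    simp only [hterm, hlast]
    abel
  rw [hD 0 1, hD 1 0] at hcoef
  have := congrArg Neg.neg hcoef
  simpa [neg_add, add_comm] using this
end

section
/- Let (g,ω₀,α) be an n-Hom-Lie algebra with ω₀(x₁,…,xₙ) = [x₁,…,xₙ]_g. If alternating multilinear maps ω₁,…,ω_{n−1} : gⁿ → g generate an (n−1)-order 1-parameter deformation of (g,ω₀,α), then (g,ω_{n−1},α) is itself an n-Hom-Lie algebra. -/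
open Function Finset

/-- Slot-wise linear map attached to an alternating multilinear map. -/
def updLM {K W U : Type*} [Field K] [AddCommGroup W] [Module K W]
    [AddCommGroup U] [Module K U] {n : ℕ} {f : (Fin n → W) → U}
    (hf : IsAltML K n f) (c : Fin n → W) (k : Fin n) : W →ₗ[K] U where
  toFun v := f (Function.update c k v)
  map_add' a b := hf.1 c k a b
  map_smul' r a := by simpa using hf.2.1 c k r a

@[simp] lemma updLM_apply {K W U : Type*} [Field K] [AddCommGroup W] [Module K W]
    [AddCommGroup U] [Module K U] {n : ℕ} {f : (Fin n → W) → U}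
    (hf : IsAltML K n f) (c : Fin n → W) (k : Fin n) (v : W) :
    updLM hf c k v = f (Function.update c k v) := rfl

/-- If a "polynomial-like" sum with vector coefficients vanishes for every scalar, then
each degree component vanishes. -/
lemma poly_coeff_eq_zero {K V ι : Type*} [Field K] [CharZero K] [AddCommGroup V]
    [Module K V] [Fintype ι] (e : ι → ℕ) (v : ι → V)
    (h : ∀ lam : K, ∑ t : ι, lam ^ e t • v t = 0) (d : ℕ) :
    ∑ t : ι, (if e t = d then v t else 0) = 0 := by
  rw [← Module.forall_dual_apply_eq_zero_iff K]
  intro φ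
  have hP0 : (∑ t : ι, Polynomial.C (φ (v t)) * Polynomial.X ^ e t) = (0 : Polynomial K) := by
    apply Polynomial.funext
    intro lam
    have h1 : Polynomial.eval lam (∑ t : ι, Polynomial.C (φ (v t)) * Polynomial.X ^ e t)
        = φ (∑ t : ι, lam ^ e t • v t) := by
      rw [map_sum φ, Polynomial.eval_finset_sum]
      refine Finset.sum_congr rfl fun t _ => ?_
      rw [Polynomial.eval_mul, Polynomial.eval_C, Polynomial.eval_pow, Polynomial.eval_X,
        map_smul, smul_eq_mul, mul_comm]
    rw [h1, h lam, map_zero, Polynomial.eval_zero]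
  have hc := congrArg (fun q => Polynomial.coeff q d) hP0
  simp only [Polynomial.finset_sum_coeff, Polynomial.coeff_C_mul,
    Polynomial.coeff_X_pow, Polynomial.coeff_zero] at hc
  rw [map_sum]
  calc (∑ t : ι, φ (if e t = d then v t else 0))
      = ∑ t : ι, φ (v t) * (if d = e t then 1 else 0) := by
        refine Finset.sum_congr rfl fun t _ => ?_
        by_cases hed : e t = d
        · simp [hed]
        · simp [hed, Ne.symm hed]
    _ = 0 := hc

/-- if `ω₁,…,ω_{n−1}` generate an `(n−1)`-order 1-parameter deformation of
the `n`-Hom-Lie algebra `(g, ω₀, α)`, then `(g, ω_{n−1}, α)` is itself an `n`-Hom-Lie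
algebra. -/
theorem deformation_top_order_is_nHomLie {K g : Type*} [Field K] [CharZero K]
    [AddCommGroup g] [Module K g] (m : ℕ) (br : (Fin (m + 2) → g) → g) (α : g ≃ₗ[K] g)
    (hg : IsNHomLie K m br α) (ω : Fin (m + 2) → (Fin (m + 2) → g) → g)
    (hω0 : ω 0 = br) (halt : ∀ i : Fin (m + 2), IsAltML K (m + 2) (ω i))
    (hdef : ∀ lam : K,
      IsNHomLie K m (fun x => ∑ i : Fin (m + 2), lam ^ (i : ℕ) • ω i x) α) :
    IsNHomLie K m (ω (Fin.last (m + 1))) α := by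
  refine ⟨halt _, ?_, ?_⟩
  · -- multiplicativity
    intro x
    have h : ∀ lam : K,
        ∑ i : Fin (m + 2), lam ^ (i : ℕ) •
          (α (ω i x) - ω i (fun j => α (x j))) = 0 := by
      intro lam
      have h2 := (hdef lam).2.1 x
      simp only [map_sum, map_smul] at h2
      simp only [smul_sub, Finset.sum_sub_distrib, sub_eq_zero]
      exact h2
    have hc := poly_coeff_eq_zero (fun i : Fin (m + 2) => (i : ℕ)) _ h (m + 1)
    rw [Fintype.sum_eq_single (Fin.last (m + 1))] at hc
    · rw [if_pos (by simp)] at hc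
      exact sub_eq_zero.mp hc
    · intro b hb
      rw [if_neg]
      intro hbv
      exact hb (Fin.ext (by simpa using hbv))
  · -- Hom-Fundamental identity
    intro x y
    set c : Fin (m + 1) → g := fun i => α (x i) with hc
    set A : Fin (m + 2) → Fin (m + 2) → g :=
      fun i j => ω i (Fin.snoc c (ω j y)) with hA
    set B : Fin (m + 2) → Fin (m + 2) → Fin (m + 2) → g :=
      fun k i j => ω i (Function.update (fun l => α (y l)) k (ω j (Fin.snoc x (y k)))) with hB
    -- the polynomial identity in lam
    have key : ∀ lam : K,
        (∑ i : Fin (m + 2), ∑ j : Fin (m + 2), lam ^ ((i : ℕ) + (j : ℕ)) • A i j) =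
          ∑ k : Fin (m + 2), ∑ i : Fin (m + 2), ∑ j : Fin (m + 2),
            lam ^ ((i : ℕ) + (j : ℕ)) • B k i j := by
      intro lam
      have H := (hdef lam).2.2 x y
      have hLHS : ∀ i : Fin (m + 2),
          ω i (Fin.snoc c (∑ j : Fin (m + 2), lam ^ (j : ℕ) • ω j y)) =
            ∑ j : Fin (m + 2), lam ^ (j : ℕ) • A i j := by
        intro i
        have hs : ∀ v : g, ω i (Fin.snoc c v) =
            updLM (halt i) (Fin.snoc c 0) (Fin.last (m + 1)) v := by
          intro v; rw [updLM_apply, Fin.update_snoc_last]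
        rw [hs, map_sum]
        refine Finset.sum_congr rfl fun j _ => ?_
        rw [map_smul, ← hs]
      have hRHS : ∀ (k i : Fin (m + 2)),
          ω i (Function.update (fun l => α (y l)) k
              (∑ j : Fin (m + 2), lam ^ (j : ℕ) • ω j (Fin.snoc x (y k)))) =
            ∑ j : Fin (m + 2), lam ^ (j : ℕ) • B k i j := by
        intro k i
        have hs : ∀ v : g, ω i (Function.update (fun l => α (y l)) k v) =
            updLM (halt i) (fun l => α (y l)) k v := fun v => rfl
        rw [hs, map_sum]
        refine Finset.sum_congr rfl fun j _ => ?_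
        rw [map_smul, ← hs]
      simp only [] at H
      calc
        (∑ i : Fin (m + 2), ∑ j : Fin (m + 2), lam ^ ((i : ℕ) + (j : ℕ)) • A i j)
            = ∑ i : Fin (m + 2), lam ^ (i : ℕ) •
                ω i (Fin.snoc c (∑ j : Fin (m + 2), lam ^ (j : ℕ) • ω j y)) := by
              refine Finset.sum_congr rfl fun i _ => ?_
              rw [hLHS i, Finset.smul_sum]
              refine Finset.sum_congr rfl fun j _ => ?_
              rw [smul_smul, pow_add]
        _ = ∑ k : Fin (m + 2), ∑ i : Fin (m + 2), lam ^ (i : ℕ) •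
              ω i (Function.update (fun l => α (y l)) k
                (∑ j : Fin (m + 2), lam ^ (j : ℕ) • ω j (Fin.snoc x (y k)))) := H
        _ = ∑ k : Fin (m + 2), ∑ i : Fin (m + 2), ∑ j : Fin (m + 2),
              lam ^ ((i : ℕ) + (j : ℕ)) • B k i j := by
              refine Finset.sum_congr rfl fun k _ => ?_
              refine Finset.sum_congr rfl fun i _ => ?_
              rw [hRHS k i, Finset.smul_sum]
              refine Finset.sum_congr rfl fun j _ => ?_
              rw [smul_smul, pow_add]
    -- package into a single polynomial-like sum over a sum type
    set ι : Type _ := (Fin (m + 2) × Fin (m + 2)) ⊕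
      (Fin (m + 2) × Fin (m + 2) × Fin (m + 2)) with hι
    set e : ι → ℕ := fun t => Sum.rec (fun p => (p.1 : ℕ) + (p.2 : ℕ))
      (fun p => (p.2.1 : ℕ) + (p.2.2 : ℕ)) t with he
    set v : ι → g := fun t => Sum.rec (fun p => A p.1 p.2)
      (fun p => -B p.1 p.2.1 p.2.2) t with hv
    have h : ∀ lam : K, ∑ t : ι, lam ^ e t • v t = 0 := by
      intro lam
      rw [Fintype.sum_sum_type]
      have h1 : (∑ p : Fin (m + 2) × Fin (m + 2),
          lam ^ e (Sum.inl p) • v (Sum.inl p)) =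
          ∑ i : Fin (m + 2), ∑ j : Fin (m + 2), lam ^ ((i : ℕ) + (j : ℕ)) • A i j := by
        rw [Fintype.sum_prod_type]
      have h2 : (∑ p : Fin (m + 2) × Fin (m + 2) × Fin (m + 2),
          lam ^ e (Sum.inr p) • v (Sum.inr p)) =
          -∑ k : Fin (m + 2), ∑ i : Fin (m + 2), ∑ j : Fin (m + 2),
            lam ^ ((i : ℕ) + (j : ℕ)) • B k i j := by
        rw [Fintype.sum_prod_type, ← Finset.sum_neg_distrib]
        refine Finset.sum_congr rfl fun k _ => ?_
        rw [Fintype.sum_prod_type, ← Finset.sum_neg_distrib]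
        refine Finset.sum_congr rfl fun i _ => ?_
        rw [← Finset.sum_neg_distrib]
        refine Finset.sum_congr rfl fun j _ => ?_
        simp [e, v]
      rw [h1, h2, key lam, add_neg_cancel]
    have hc2 := poly_coeff_eq_zero e v h (2 * m + 2)
    rw [Fintype.sum_sum_type] at hc2
    have hl : (∑ p : Fin (m + 2) × Fin (m + 2),
        (if e (Sum.inl p) = 2 * m + 2 then v (Sum.inl p) else 0)) =
        A (Fin.last (m + 1)) (Fin.last (m + 1)) := by
      rw [Fintype.sum_eq_single (Fin.last (m + 1), Fin.last (m + 1))]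
      · rw [if_pos (by simp [e, Fin.val_last]; omega)]
      · rintro ⟨i, j⟩ hb
        rw [if_neg]
        intro hbv
        apply hb
        have hi := i.isLt
        have hj := j.isLt
        simp only [e] at hbv
        have : (i : ℕ) = m + 1 ∧ (j : ℕ) = m + 1 := by omega
        exact Prod.ext (Fin.ext (by simp [this.1])) (Fin.ext (by simp [this.2]))
    have hr : (∑ p : Fin (m + 2) × Fin (m + 2) × Fin (m + 2),
        (if e (Sum.inr p) = 2 * m + 2 then v (Sum.inr p) else 0)) =
        -∑ k : Fin (m + 2), B k (Fin.last (m + 1)) (Fin.last (m + 1)) := by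
      rw [Fintype.sum_prod_type, ← Finset.sum_neg_distrib]
      refine Finset.sum_congr rfl fun k _ => ?_
      rw [Fintype.sum_eq_single (Fin.last (m + 1), Fin.last (m + 1))]
      · rw [if_pos (by simp [e, Fin.val_last]; omega)]
      · rintro ⟨i, j⟩ hb
        rw [if_neg]
        intro hbv
        apply hb
        have hi := i.isLt
        have hj := j.isLt
        simp only [e] at hbv
        have : (i : ℕ) = m + 1 ∧ (j : ℕ) = m + 1 := by omega
        exact Prod.ext (Fin.ext (by simp [this.1])) (Fin.ext (by simp [this.2]))
    rw [hl, hr] at hc2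
    have hc3 : A (Fin.last (m + 1)) (Fin.last (m + 1)) -
        ∑ k : Fin (m + 2), B k (Fin.last (m + 1)) (Fin.last (m + 1)) = 0 := by
      rw [sub_eq_add_neg]; exact hc2
    have hfin := sub_eq_zero.mp hc3
    simpa only [A, B, c] using hfin
end

section
/- Let N be a Hom-Nijenhuis operator of an n-Hom-Lie algebra (g,[·,…,·]_g,α). Setting ωᵢ(x₁,…,xₙ) = [x₁,…,xₙ]_N^i for 1 ≤ i ≤ n−1 (and ω₀ = [·,…,·]_g), the maps ω₁,…,ω_{n−1} generate an (n−1)-order 1-parameter deformation of (g,ω₀,α): (g,ω_λ,α) with ω_λ = Σ_{i=0}^{n−1} λⁱωᵢ is an n-Hom-Lie algebra for every λ ∈ K. Moreover this deformation is trivial: for every λ ∈ K the map T_λ = α + λN satisfies T_λ∘α = α∘T_λ and T_λ(ω_λ(x₁,…,xₙ)) = [T_λ(x₁),…,T_λ(xₙ)]_g for all xᵢ ∈ g. -/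
open Function Finset

/-- The deformed brackets `[·,…,·]_N^i` associated to a linear map `N` on an `n`-ary
algebra `(W, br, φ)`: `[x]_N^0 = br x`, and
`[x₁,…,xₙ]_N^{i+1} = Σ_{l₁<⋯<l_{i+1}} [x₁,…,N(φ⁻¹(x_{l₁})),…,N(φ⁻¹(x_{l_{i+1}})),…,xₙ]
 − N([φ⁻¹(x₁),…,φ⁻¹(xₙ)]_N^i)`. -/
def NBracket {K W : Type*} [Field K] [AddCommGroup W] [Module K W] (m : ℕ)
    (br : (Fin (m + 2) → W) → W) (φ : W ≃ₗ[K] W) (N : W →ₗ[K] W) :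
    ℕ → (Fin (m + 2) → W) → W
  | 0, x => br x
  | (i + 1), x =>
      (∑ S ∈ (Finset.univ : Finset (Fin (m + 2))).powersetCard (i + 1),
          br (fun l => if l ∈ S then N (φ.symm (x l)) else x l)) -
        N (NBracket m br φ N i (fun l => φ.symm (x l)))

/-- A Hom-Nijenhuis operator of the `n`-Hom-Lie algebra `(W, br, φ)`: a linear map `N`
commuting with `φ` such that `[N(x₁),…,N(xₙ)] = N([x₁,…,xₙ]_N^{n−1})`. -/
def IsHomNijenhuis {K W : Type*} [Field K] [AddCommGroup W] [Module K W] (m : ℕ)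
    (br : (Fin (m + 2) → W) → W) (φ : W ≃ₗ[K] W) (N : W →ₗ[K] W) : Prop :=
  (∀ a : W, N (φ a) = φ (N a)) ∧
  (∀ x : Fin (m + 2) → W,
    br (fun l => N (x l)) = N (NBracket m br φ N (m + 1) x))

section Aux
variable {K g : Type*} [Field K] [AddCommGroup g] [Module K g] {m : ℕ}
  {br : (Fin (m + 2) → g) → g} {α : g ≃ₗ[K] g} {N : g →ₗ[K] g}

lemma auxNsymm (hNα : ∀ a, N (α a) = α (N a)) (a : g) : N (α.symm a) = α.symm (N a) := by
  have := hNα (α.symm a)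
  rw [α.apply_symm_apply] at this
  rw [this, α.symm_apply_apply]

lemma auxNB_alpha (hbr2 : ∀ x : Fin (m + 2) → g, α (br x) = br fun i => α (x i))
    (hNα : ∀ a, N (α a) = α (N a)) :
    ∀ (i : ℕ) (x : Fin (m + 2) → g),
      NBracket m br α N i (fun l => α (x l)) = α (NBracket m br α N i x) := by
  intro i
  induction i with
  | zero => intro x; exact (hbr2 x).symm
  | succ i ih =>
    intro x
    have h3 : (fun l => α.symm (α (x l))) = x := by funext l; exact α.symm_apply_apply _
    have hL : NBracket m br α N (i + 1) (fun l => α (x l)) =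
        (∑ S ∈ (Finset.univ : Finset (Fin (m + 2))).powersetCard (i + 1),
          br (fun l => if l ∈ S then N (x l) else α (x l))) -
        N (NBracket m br α N i x) := by
      rw [NBracket]
      congr 1
      · refine Finset.sum_congr rfl fun S _ => ?_
        congr 1
        funext l
        by_cases h : l ∈ S <;> simp [h, α.symm_apply_apply]
      · congr 1
        rw [h3]
    have hR : α (NBracket m br α N (i + 1) x) =
        (∑ S ∈ (Finset.univ : Finset (Fin (m + 2))).powersetCard (i + 1),
          br (fun l => if l ∈ S then N (x l) else α (x l))) -
        N (NBracket m br α N i x) := by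
      rw [NBracket, map_sub, map_sum]
      congr 1
      · refine Finset.sum_congr rfl fun S _ => ?_
        rw [hbr2]
        congr 1
        funext l
        by_cases h : l ∈ S <;>
          simp [h, ← hNα, α.apply_symm_apply]
      · rw [← hNα, ← ih (fun l => α.symm (x l))]
        have : (fun l => α (α.symm (x l))) = x := by
          funext l; exact α.apply_symm_apply _
        rw [this]
    rw [hL, hR]

/-- The binomial-type identity for the sums over subsets of fixed cardinality. -/
lemma auxSumS (hbr2 : ∀ x : Fin (m + 2) → g, α (br x) = br fun i => α (x i))
    (hNα : ∀ a, N (α a) = α (N a)) (i : ℕ) (x : Fin (m + 2) → g) :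
    ∑ S ∈ (Finset.univ : Finset (Fin (m + 2))).powersetCard (i + 1),
        br (fun l => if l ∈ S then N (x l) else α (x l)) =
      α (NBracket m br α N (i + 1) x) + N (NBracket m br α N i x) := by
  have h := auxNB_alpha hbr2 hNα (i + 1) x
  rw [NBracket] at h
  have h3 : (fun l => α.symm (α (x l))) = x := by funext l; exact α.symm_apply_apply _
  have h2 : ∀ S : Finset (Fin (m + 2)),
      (fun l => if l ∈ S then N (α.symm (α (x l))) else α (x l)) =
        fun l => if l ∈ S then N (x l) else α (x l) := by
    intro S; funext l; rw [α.symm_apply_apply]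
  simp only [h2, h3] at h
  rw [sub_eq_iff_eq_add] at h
  rw [h]


lemma auxNB_top
    (hN2 : ∀ x : Fin (m + 2) → g,
      br (fun l => N (x l)) = N (NBracket m br α N (m + 1) x))
    (x : Fin (m + 2) → g) : NBracket m br α N (m + 2) x = 0 := by
  show NBracket m br α N (m + 1 + 1) x = 0
  rw [NBracket]
  have hps : (Finset.univ : Finset (Fin (m + 2))).powersetCard (m + 1 + 1) =
      {(Finset.univ : Finset (Fin (m + 2)))} := by
    have := Finset.powersetCard_self (Finset.univ : Finset (Fin (m + 2)))
    rwa [show (Finset.univ : Finset (Fin (m + 2))).card = m + 1 + 1 by simp] at this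
  rw [hps, Finset.sum_singleton]
  have harg : (fun l => if l ∈ (Finset.univ : Finset (Fin (m + 2))) then N (α.symm (x l)) else x l)
      = fun l => N ((fun j => α.symm (x j)) l) := by
    funext l; simp
  rw [harg, hN2 (fun j => α.symm (x j)), sub_self]


def auxBrM (hbr : IsAltML K (m + 2) br) : MultilinearMap K (fun _ : Fin (m + 2) => g) g where
  toFun := br
  map_update_add' := by
    intro dec x i a b
    rw [Subsingleton.elim dec (instDecidableEqFin (m + 2))]
    exact hbr.1 x i a b
  map_update_smul' := by
    intro dec x i c a
    rw [Subsingleton.elim dec (instDecidableEqFin (m + 2))]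
    exact hbr.2.1 x i c a

@[simp] lemma auxBrM_apply (hbr : IsAltML K (m + 2) br) (x : Fin (m + 2) → g) :
    auxBrM hbr x = br x := rfl

lemma auxEXP (hbr : IsAltML K (m + 2) br) (lam : K) (x : Fin (m + 2) → g) :
    br (fun l => α (x l) + lam • N (x l)) =
      ∑ j ∈ Finset.range (m + 3), lam ^ j •
        ∑ S ∈ (Finset.univ : Finset (Fin (m + 2))).powersetCard j,
          br (fun l => if l ∈ S then N (x l) else α (x l)) := by
  have h0 : (fun l => α (x l) + lam • N (x l)) =
      (fun l => lam • N (x l)) + (fun l => α (x l)) := by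
    funext l; simp [add_comm]
  have h1 := (auxBrM hbr).map_add_univ (fun l => lam • N (x l)) (fun l => α (x l))
  have h2 : br (fun l => α (x l) + lam • N (x l)) =
      ∑ s : Finset (Fin (m + 2)),
        auxBrM hbr (s.piecewise (fun l => lam • N (x l)) (fun l => α (x l))) := by
    rw [← h1, ← auxBrM_apply hbr, h0]
  rw [h2]
  have hterm : ∀ (j : ℕ), ∀ t ∈ (Finset.univ : Finset (Fin (m + 2))).powersetCard j,
      auxBrM hbr (t.piecewise (fun l => lam • N (x l)) (fun l => α (x l))) =
        lam ^ j • br (fun l => if l ∈ t then N (x l) else α (x l)) := by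
    intro j t ht
    set y : Fin (m + 2) → g := fun l => if l ∈ t then N (x l) else α (x l) with hy
    have hpiece : t.piecewise (fun l => lam • N (x l)) (fun l => α (x l)) =
        t.piecewise (fun l => lam • y l) y := by
      funext l
      by_cases h : l ∈ t <;> simp [Finset.piecewise, h, hy]
    rw [hpiece, (auxBrM hbr).map_piecewise_smul (fun _ => lam) y t]
    rw [Finset.prod_const, (Finset.mem_powersetCard.mp ht).2]
    rfl
  calc ∑ s : Finset (Fin (m + 2)),
        auxBrM hbr (s.piecewise (fun l => lam • N (x l)) (fun l => α (x l)))
      = ∑ s ∈ (Finset.univ : Finset (Fin (m + 2))).powerset,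
        auxBrM hbr (s.piecewise (fun l => lam • N (x l)) (fun l => α (x l))) := by
        rw [Finset.powerset_univ]
    _ = ∑ j ∈ Finset.range ((Finset.univ : Finset (Fin (m + 2))).card + 1),
        ∑ s ∈ (Finset.univ : Finset (Fin (m + 2))).powersetCard j,
          auxBrM hbr (s.piecewise (fun l => lam • N (x l)) (fun l => α (x l))) := by
        rw [Finset.sum_powerset]
    _ = ∑ j ∈ Finset.range (m + 3), lam ^ j •
          ∑ S ∈ (Finset.univ : Finset (Fin (m + 2))).powersetCard j,
            br (fun l => if l ∈ S then N (x l) else α (x l)) := by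
        rw [show (Finset.univ : Finset (Fin (m + 2))).card + 1 = m + 3 by simp]
        refine Finset.sum_congr rfl fun j _ => ?_
        rw [Finset.smul_sum]
        exact Finset.sum_congr rfl (hterm j)

lemma auxKEY (hg : IsNHomLie K m br α) (hN : IsHomNijenhuis m br α N) (lam : K)
    (x : Fin (m + 2) → g) :
    α (∑ i : Fin (m + 2), lam ^ (i : ℕ) • NBracket m br α N i x) +
        lam • N (∑ i : Fin (m + 2), lam ^ (i : ℕ) • NBracket m br α N i x) =
      br (fun l => α (x l) + lam • N (x l)) := by
  rw [auxEXP hg.1 lam x]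
  have hA : α (∑ i : Fin (m + 2), lam ^ (i : ℕ) • NBracket m br α N i x) =
      ∑ j ∈ Finset.range (m + 2), lam ^ j • α (NBracket m br α N j x) := by
    rw [map_sum]
    simp only [map_smul]
    exact Fin.sum_univ_eq_sum_range (fun j => lam ^ j • α (NBracket m br α N j x)) (m + 2)
  have hB : lam • N (∑ i : Fin (m + 2), lam ^ (i : ℕ) • NBracket m br α N i x) =
      ∑ j ∈ Finset.range (m + 2), lam ^ (j + 1) • N (NBracket m br α N j x) := by
    rw [map_sum, Finset.smul_sum]
    simp only [map_smul, smul_smul, ← pow_succ']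
    exact Fin.sum_univ_eq_sum_range (fun j => lam ^ (j + 1) • N (NBracket m br α N j x)) (m + 2)
  rw [hA, hB]
  rw [show m + 3 = (m + 2) + 1 from rfl,
    Finset.sum_range_succ' (fun j => lam ^ j • ∑ S ∈ (Finset.univ : Finset (Fin (m + 2))).powersetCard j,
      br (fun l => if l ∈ S then N (x l) else α (x l))) (m + 2)]
  have h0 : lam ^ 0 • ∑ S ∈ (Finset.univ : Finset (Fin (m + 2))).powersetCard 0,
      br (fun l => if l ∈ S then N (x l) else α (x l)) = α (NBracket m br α N 0 x) := by
    rw [Finset.powersetCard_zero, Finset.sum_singleton, pow_zero, one_smul]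
    show br (fun l => if l ∈ (∅ : Finset (Fin (m+2))) then N (x l) else α (x l)) = _
    have : (fun l => if l ∈ (∅ : Finset (Fin (m+2))) then N (x l) else α (x l)) =
        fun l => α (x l) := by funext l; simp
    rw [this, show NBracket m br α N 0 x = br x from rfl, hg.2.1]
  have hj : ∀ j ∈ Finset.range (m + 2),
      lam ^ (j + 1) • ∑ S ∈ (Finset.univ : Finset (Fin (m + 2))).powersetCard (j + 1),
        br (fun l => if l ∈ S then N (x l) else α (x l)) =
      lam ^ (j + 1) • α (NBracket m br α N (j + 1) x) +
        lam ^ (j + 1) • N (NBracket m br α N j x) := by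
    intro j _
    rw [auxSumS hg.2.1 hN.1 j x, smul_add]
  rw [Finset.sum_congr rfl hj, h0, Finset.sum_add_distrib]
  have htop : ∑ j ∈ Finset.range (m + 2), lam ^ (j + 1) • α (NBracket m br α N (j + 1) x) +
      α (NBracket m br α N 0 x) =
      ∑ j ∈ Finset.range (m + 2), lam ^ j • α (NBracket m br α N j x) := by
    have := Finset.sum_range_succ' (fun j => lam ^ j • α (NBracket m br α N j x)) (m + 2)
    rw [Finset.sum_range_succ] at this
    have hz : NBracket m br α N (m + 2) x = 0 := auxNB_top hN.2 x
    rw [hz] at this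
    simp only [pow_zero, one_smul, map_zero, smul_zero, add_zero] at this
    exact this.symm
  rw [← htop]
  abel

def auxBrA (hbr : IsAltML K (m + 2) br) : AlternatingMap K g g (Fin (m + 2)) :=
  { auxBrM hbr with
    map_eq_zero_of_eq' := fun v i j h hij => hbr.2.2 v i j hij h }

@[simp] lemma auxBrA_apply (hbr : IsAltML K (m + 2) br) (x : Fin (m + 2) → g) :
    auxBrA hbr x = br x := rfl

lemma auxNB_alt [CharZero K] (hbr : IsAltML K (m + 2) br) :
    ∀ (i : ℕ) (x : Fin (m + 2) → g) (i' j' : Fin (m + 2)), i' ≠ j' → x i' = x j' →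
      NBracket m br α N i x = 0 := by
  intro i
  induction i with
  | zero => exact fun x i' j' hne hxx => hbr.2.2 x i' j' hne hxx
  | succ i ih =>
    intro x i' j' hne hxx
    rw [NBracket]
    have hsecond : NBracket m br α N i (fun l => α.symm (x l)) = 0 := by
      refine ih _ i' j' hne ?_
      rw [hxx]
    rw [hsecond, map_zero, sub_zero]
    set σ := Equiv.swap i' j' with hσ
    set f : Finset (Fin (m + 2)) → g :=
      fun S => br (fun l => if l ∈ S then N (α.symm (x l)) else x l) with hf
    have hswap : ∀ S : Finset (Fin (m + 2)),
        f (S.map σ.toEmbedding) = - f S := by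
      intro S
      have harg : (fun l => if l ∈ S.map σ.toEmbedding then N (α.symm (x l)) else x l) =
          (fun l => if l ∈ S then N (α.symm (x l)) else x l) ∘ σ := by
        funext l
        have hmem : l ∈ S.map σ.toEmbedding ↔ σ l ∈ S := by
          rw [Finset.mem_map_equiv, hσ, Equiv.symm_swap]
        have hxσ : x (σ l) = x l := by
          rcases eq_or_ne l i' with rfl | h1
          · rw [hσ, Equiv.swap_apply_left]; exact hxx.symm
          rcases eq_or_ne l j' with rfl | h2
          · rw [hσ, Equiv.swap_apply_right]; exact hxx
          · rw [hσ, Equiv.swap_apply_of_ne_of_ne h1 h2]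
        simp only [Function.comp_apply, hmem, hxσ]
      have := (auxBrA hbr).map_swap (fun l => if l ∈ S then N (α.symm (x l)) else x l) hne
      rw [hf]
      simp only [harg]
      calc br ((fun l => if l ∈ S then N (α.symm (x l)) else x l) ∘ σ)
          = (auxBrA hbr) ((fun l => if l ∈ S then N (α.symm (x l)) else x l) ∘ Equiv.swap i' j') := rfl
        _ = - (auxBrA hbr) (fun l => if l ∈ S then N (α.symm (x l)) else x l) := this
        _ = - br (fun l => if l ∈ S then N (α.symm (x l)) else x l) := rfl
    refine Finset.sum_involution (fun S _ => S.map σ.toEmbedding) ?_ ?_ ?_ ?_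
    · intro S _
      show f S + f (S.map σ.toEmbedding) = 0
      rw [hswap S, add_neg_cancel]
    · intro S _ hfS hGS
      have hfS' : f S ≠ 0 := hfS
      have hGS' : S.map σ.toEmbedding = S := hGS
      exfalso
      apply hfS'
      have h2 : f S + f S = 0 := by
        nth_rewrite 2 [← hGS']
        rw [hswap S, add_neg_cancel]
      have h3 : (2 : K) • f S = 0 := by
        rw [two_smul]; exact h2
      exact (smul_eq_zero.mp h3).resolve_left two_ne_zero
    · intro S hS
      rw [Finset.mem_powersetCard_univ] at hS ⊢
      rw [Finset.card_map, hS]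
    · intro S _
      ext a
      simp [Finset.mem_map_equiv, hσ, Equiv.symm_swap, Equiv.swap_apply_self]

lemma auxVan [CharZero K] {D : ℕ} (v : ℕ → g)
    (h : ∀ lam : K, lam ≠ 0 → ∑ k ∈ Finset.range D, lam ^ k • v k = 0) :
    ∀ k < D, v k = 0 := by
  intro k hk
  rw [← Module.forall_dual_apply_eq_zero_iff K (v k)]
  intro ℓ
  set p : Polynomial K := ∑ j ∈ Finset.range D, Polynomial.C (ℓ (v j)) * Polynomial.X ^ j with hp
  have hproot : ∀ lam : K, lam ≠ 0 → p.eval lam = 0 := by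
    intro lam hlam
    rw [hp]
    simp only [Polynomial.eval_finset_sum, Polynomial.eval_mul, Polynomial.eval_C,
      Polynomial.eval_pow, Polynomial.eval_X]
    have h2 := congrArg ℓ (h lam hlam)
    rw [map_sum] at h2
    simp only [map_smul, smul_eq_mul, map_zero] at h2
    rw [← h2]
    exact Finset.sum_congr rfl fun j _ => mul_comm _ _
  have hp0 : p = 0 := by
    apply Polynomial.eq_zero_of_infinite_isRoot
    have hinf : ({x : K | x ≠ 0}).Infinite := by
      apply Set.infinite_of_finite_compl
      simp [Set.compl_setOf]
    exact hinf.mono fun x hx => hproot x hx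
  have hcoeff : ℓ (v k) = p.coeff k := by
    rw [hp, Polynomial.finset_sum_coeff]
    simp only [Polynomial.coeff_C_mul, Polynomial.coeff_X_pow]
    rw [Finset.sum_eq_single k]
    · rw [if_pos rfl, mul_one]
    · intro b _ hbk
      rw [if_neg (fun hkb => hbk hkb.symm), mul_zero]
    · intro hkD
      exact absurd (Finset.mem_range.mpr hk) hkD
  rw [hcoeff, hp0, Polynomial.coeff_zero]

lemma auxVan2 [CharZero K] {D : ℕ} (v : ℕ → g)
    (h : ∀ lam : K, α (∑ k ∈ Finset.range D, lam ^ k • v k) +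
      lam • N (∑ k ∈ Finset.range D, lam ^ k • v k) = 0) :
    ∀ k < D, v k = 0 := by
  set u : ℕ → g := fun k =>
    (if k < D then α (v k) else 0) +
      (if 1 ≤ k ∧ k - 1 < D then N (v (k - 1)) else 0) with hu
  have husum : ∀ lam : K, ∑ k ∈ Finset.range (D + 1), lam ^ k • u k = 0 := by
    intro lam
    have hexp : ∑ k ∈ Finset.range (D + 1), lam ^ k • u k =
        (∑ k ∈ Finset.range D, lam ^ k • α (v k)) +
          ∑ k ∈ Finset.range D, lam ^ (k + 1) • N (v k) := by
      have hsplit : ∀ k, lam ^ k • u k =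
          lam ^ k • (if k < D then α (v k) else 0) +
            lam ^ k • (if 1 ≤ k ∧ k - 1 < D then N (v (k - 1)) else 0) := by
        intro k; rw [hu]; exact smul_add _ _ _
      rw [Finset.sum_congr rfl fun k _ => hsplit k, Finset.sum_add_distrib]
      congr 1
      · rw [Finset.sum_range_succ, if_neg (lt_irrefl D), smul_zero, add_zero]
        exact Finset.sum_congr rfl fun k hk => by rw [if_pos (Finset.mem_range.mp hk)]
      · rw [Finset.sum_range_succ']
        have h0 : lam ^ 0 • (if 1 ≤ 0 ∧ 0 - 1 < D then N (v (0 - 1)) else 0) = (0 : g) := by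
          rw [if_neg (by omega), smul_zero]
        rw [h0, add_zero]
        refine Finset.sum_congr rfl fun k hk => ?_
        have : (1 ≤ k + 1 ∧ k + 1 - 1 < D) := by
          constructor
          · omega
          · simpa using Finset.mem_range.mp hk
        rw [if_pos this]
        simp
    rw [hexp]
    have h' := h lam
    rw [map_sum, map_sum, Finset.smul_sum] at h'
    simp only [map_smul, smul_smul, ← pow_succ'] at h'
    exact h'
  have hu0 : ∀ k < D + 1, u k = 0 := auxVan u fun lam _ => husum lam
  intro k
  induction k with
  | zero =>
    intro hk
    have h0 := hu0 0 (Nat.succ_pos D)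
    rw [hu] at h0
    simp only [if_pos hk, if_neg (by omega : ¬(1 ≤ 0 ∧ 0 - 1 < D)), add_zero] at h0
    exact (LinearEquiv.map_eq_zero_iff α).mp h0
  | succ k ih =>
    intro hk
    have hvk : v k = 0 := ih (Nat.lt_of_succ_lt hk)
    have h1 := hu0 (k + 1) (Nat.lt_succ_of_lt hk)
    rw [hu] at h1
    simp only [if_pos hk, if_pos (show 1 ≤ k + 1 ∧ k + 1 - 1 < D by omega),
      Nat.add_sub_cancel, hvk, map_zero, ite_self, add_zero] at h1
    exact (LinearEquiv.map_eq_zero_iff α).mp h1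

variable (α N) in
/-- The deformed brackets, packaged as multilinear maps. -/
def auxNBml (B : MultilinearMap K (fun _ : Fin (m + 2) => g) g) :
    ℕ → MultilinearMap K (fun _ : Fin (m + 2) => g) g
  | 0 => B
  | (i + 1) =>
      (∑ S ∈ (Finset.univ : Finset (Fin (m + 2))).powersetCard (i + 1),
          B.compLinearMap (fun l =>
            if l ∈ S then N ∘ₗ (α.symm : g →ₗ[K] g) else LinearMap.id)) -
        N.compMultilinearMap ((auxNBml B i).compLinearMap fun _ => (α.symm : g →ₗ[K] g))

lemma auxNBml_eq (hbr : IsAltML K (m + 2) br) :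
    ∀ (i : ℕ) (x : Fin (m + 2) → g), auxNBml α N (auxBrM hbr) i x = NBracket m br α N i x := by
  intro i
  induction i with
  | zero => intro x; rfl
  | succ i ih =>
    intro x
    simp only [auxNBml, NBracket, MultilinearMap.sub_apply, MultilinearMap.sum_apply,
      MultilinearMap.compLinearMap_apply, LinearMap.compMultilinearMap_apply, ih]
    congr 1
    refine Finset.sum_congr rfl fun S _ => ?_
    show (auxBrM hbr) _ = _
    rw [auxBrM_apply]
    congr 1
    funext l
    by_cases h : l ∈ S <;> simp [h]

lemma auxNB_slot_sum (hbr : IsAltML K (m + 2) br) (i : ℕ) (w : Fin (m + 2) → g)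
    (l0 : Fin (m + 2)) (c : Fin (m + 2) → K) (z : Fin (m + 2) → g) :
    NBracket m br α N i (Function.update w l0 (∑ j : Fin (m + 2), c j • z j)) =
      ∑ j : Fin (m + 2), c j • NBracket m br α N i (Function.update w l0 (z j)) := by
  simp only [← auxNBml_eq hbr]
  rw [(auxNBml α N (auxBrM hbr) i).map_update_sum Finset.univ l0 (fun j => c j • z j) w]
  exact Finset.sum_congr rfl fun j _ =>
    (auxNBml α N (auxBrM hbr) i).map_update_smul w l0 (c j) (z j)

lemma auxOmega_sub (hbr : IsAltML K (m + 2) br) (x : Fin (m + 1) → g) (y : Fin (m + 2) → g)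
    (t : K) :
    (∑ i : Fin (m + 2), t ^ (i : ℕ) •
        NBracket m br α N i (Fin.snoc (fun i => α (x i))
          (∑ j : Fin (m + 2), t ^ (j : ℕ) • NBracket m br α N j y))) -
      (∑ k : Fin (m + 2), ∑ i : Fin (m + 2), t ^ (i : ℕ) •
        NBracket m br α N i (Function.update (fun j => α (y j)) k
          (∑ j : Fin (m + 2), t ^ (j : ℕ) • NBracket m br α N j (Fin.snoc x (y k))))) =
    ∑ p : Fin (m + 2) × Fin (m + 2), t ^ ((p.1 : ℕ) + (p.2 : ℕ)) •
      (NBracket m br α N p.1 (Fin.snoc (fun i => α (x i)) (NBracket m br α N p.2 y)) -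
        ∑ k : Fin (m + 2), NBracket m br α N p.1 (Function.update (fun j => α (y j)) k
          (NBracket m br α N p.2 (Fin.snoc x (y k))))) := by
  have hsnoc : ∀ (i : ℕ),
      NBracket m br α N i (Fin.snoc (fun i => α (x i))
        (∑ j : Fin (m + 2), t ^ (j : ℕ) • NBracket m br α N j y)) =
      ∑ j : Fin (m + 2), t ^ (j : ℕ) •
        NBracket m br α N i (Fin.snoc (fun i => α (x i)) (NBracket m br α N j y)) := by
    intro i
    have hsu : ∀ z : g, (Fin.snoc (fun i => α (x i)) z : Fin (m + 2) → g) =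
        Function.update (Fin.snoc (fun i => α (x i)) (0 : g)) (Fin.last (m + 1)) z := by
      intro z; rw [Fin.update_snoc_last]
    rw [hsu, auxNB_slot_sum hbr i _ _ _ _]
    exact Finset.sum_congr rfl fun j _ => by rw [← hsu]
  have hupd : ∀ (i : ℕ) (k : Fin (m + 2)),
      NBracket m br α N i (Function.update (fun j => α (y j)) k
        (∑ j : Fin (m + 2), t ^ (j : ℕ) • NBracket m br α N j (Fin.snoc x (y k)))) =
      ∑ j : Fin (m + 2), t ^ (j : ℕ) •
        NBracket m br α N i (Function.update (fun j => α (y j)) k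
          (NBracket m br α N j (Fin.snoc x (y k)))) := by
    intro i k
    exact auxNB_slot_sum hbr i _ _ _ _
  simp only [hsnoc, hupd, Finset.smul_sum, smul_smul, ← pow_add, Fintype.sum_prod_type,
    smul_sub, Finset.sum_sub_distrib]
  congr 1
  rw [Finset.sum_comm]
  exact Finset.sum_congr rfl fun i _ => Finset.sum_comm

lemma auxTvanish [CharZero K] (hg : IsNHomLie K m br α) (hN : IsHomNijenhuis m br α N)
    (x : Fin (m + 1) → g) (y : Fin (m + 2) → g) (t : K) :
    α ((∑ i : Fin (m + 2), t ^ (i : ℕ) •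
        NBracket m br α N i (Fin.snoc (fun i => α (x i))
          (∑ j : Fin (m + 2), t ^ (j : ℕ) • NBracket m br α N j y))) -
      (∑ k : Fin (m + 2), ∑ i : Fin (m + 2), t ^ (i : ℕ) •
        NBracket m br α N i (Function.update (fun j => α (y j)) k
          (∑ j : Fin (m + 2), t ^ (j : ℕ) • NBracket m br α N j (Fin.snoc x (y k)))))) +
    t • N ((∑ i : Fin (m + 2), t ^ (i : ℕ) •
        NBracket m br α N i (Fin.snoc (fun i => α (x i))
          (∑ j : Fin (m + 2), t ^ (j : ℕ) • NBracket m br α N j y))) -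
      (∑ k : Fin (m + 2), ∑ i : Fin (m + 2), t ^ (i : ℕ) •
        NBracket m br α N i (Function.update (fun j => α (y j)) k
          (∑ j : Fin (m + 2), t ^ (j : ℕ) • NBracket m br α N j (Fin.snoc x (y k)))))) = 0 := by
  have KEY : ∀ z : Fin (m + 2) → g,
      α (∑ i : Fin (m + 2), t ^ (i : ℕ) • NBracket m br α N i z) +
        t • N (∑ i : Fin (m + 2), t ^ (i : ℕ) • NBracket m br α N i z) =
      br (fun l => α (z l) + t • N (z l)) := auxKEY hg hN t
  have hTα : ∀ a : g, α (α a) + t • N (α a) = α (α a + t • N a) := by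
    intro a; rw [map_add, map_smul, hN.1 a]
  have hTsub : ∀ a b : g, α (a - b) + t • N (a - b) = (α a + t • N a) - (α b + t • N b) := by
    intro a b; rw [map_sub, map_sub, smul_sub]; abel
  rw [hTsub, sub_eq_zero]
  -- compute T applied to the left-hand side
  rw [KEY (Fin.snoc (fun i => α (x i)) (∑ j : Fin (m + 2), t ^ (j : ℕ) • NBracket m br α N j y))]
  have hz1 : (fun l => α ((Fin.snoc (fun i => α (x i))
        (∑ j : Fin (m + 2), t ^ (j : ℕ) • NBracket m br α N j y) : Fin (m + 2) → g) l) +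
        t • N ((Fin.snoc (fun i => α (x i))
          (∑ j : Fin (m + 2), t ^ (j : ℕ) • NBracket m br α N j y) : Fin (m + 2) → g) l)) =
      Fin.snoc (fun i => α (α (x i) + t • N (x i)))
        (br (fun l => α (y l) + t • N (y l))) := by
    funext l
    refine Fin.lastCases ?_ ?_ l
    · simp only [Fin.snoc_last]
      exact KEY y
    · intro i
      simp only [Fin.snoc_castSucc]
      exact hTα (x i)
  rw [hz1]
  rw [hg.2.2 (fun i => α (x i) + t • N (x i)) (fun l => α (y l) + t • N (y l))]
  -- now handle the right-hand side
  have hterm : ∀ k : Fin (m + 2),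
      br (Function.update (fun j => α (α (y j) + t • N (y j))) k
        (br (Fin.snoc (fun i => α (x i) + t • N (x i)) (α (y k) + t • N (y k))))) =
      α (∑ i : Fin (m + 2), t ^ (i : ℕ) •
          NBracket m br α N i (Function.update (fun j => α (y j)) k
            (∑ j : Fin (m + 2), t ^ (j : ℕ) • NBracket m br α N j (Fin.snoc x (y k))))) +
        t • N (∑ i : Fin (m + 2), t ^ (i : ℕ) •
          NBracket m br α N i (Function.update (fun j => α (y j)) k
            (∑ j : Fin (m + 2), t ^ (j : ℕ) • NBracket m br α N j (Fin.snoc x (y k))))) := by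
    intro k
    have hsx : (Fin.snoc (fun i => α (x i) + t • N (x i)) (α (y k) + t • N (y k)) :
        Fin (m + 2) → g) =
        fun l => α ((Fin.snoc x (y k) : Fin (m + 2) → g) l) +
          t • N ((Fin.snoc x (y k) : Fin (m + 2) → g) l) := by
      funext l
      refine Fin.lastCases ?_ ?_ l
      · simp only [Fin.snoc_last]
      · intro i; simp only [Fin.snoc_castSucc]
    rw [hsx, ← KEY (Fin.snoc x (y k))]
    have hupdeq : Function.update (fun j => α (α (y j) + t • N (y j))) k
        (α (∑ j : Fin (m + 2), t ^ (j : ℕ) • NBracket m br α N j (Fin.snoc x (y k))) +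
          t • N (∑ j : Fin (m + 2), t ^ (j : ℕ) • NBracket m br α N j (Fin.snoc x (y k)))) =
        fun l => α ((Function.update (fun j => α (y j)) k
            (∑ j : Fin (m + 2), t ^ (j : ℕ) • NBracket m br α N j (Fin.snoc x (y k))) : Fin (m + 2) → g) l) +
          t • N ((Function.update (fun j => α (y j)) k
            (∑ j : Fin (m + 2), t ^ (j : ℕ) • NBracket m br α N j (Fin.snoc x (y k))) : Fin (m + 2) → g) l) := by
      funext l
      by_cases hl : l = k
      · subst hl
        rw [Function.update_self, Function.update_self]
      · rw [Function.update_of_ne hl, Function.update_of_ne hl]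
        exact (hTα (y l)).symm
    rw [hupdeq, ← KEY]
  rw [Finset.sum_congr rfl fun k _ => hterm k]
  rw [Finset.sum_add_distrib, ← map_sum, ← Finset.smul_sum, ← map_sum]

lemma auxFI [CharZero K] (hg : IsNHomLie K m br α) (hN : IsHomNijenhuis m br α N)
    (lam : K) (x : Fin (m + 1) → g) (y : Fin (m + 2) → g) :
    (∑ i : Fin (m + 2), lam ^ (i : ℕ) •
        NBracket m br α N i (Fin.snoc (fun i => α (x i))
          (∑ j : Fin (m + 2), lam ^ (j : ℕ) • NBracket m br α N j y))) =
      ∑ k : Fin (m + 2), ∑ i : Fin (m + 2), lam ^ (i : ℕ) •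
        NBracket m br α N i (Function.update (fun j => α (y j)) k
          (∑ j : Fin (m + 2), lam ^ (j : ℕ) • NBracket m br α N j (Fin.snoc x (y k)))) := by
  set c : Fin (m + 2) × Fin (m + 2) → g := fun p =>
    NBracket m br α N p.1 (Fin.snoc (fun i => α (x i)) (NBracket m br α N p.2 y)) -
      ∑ k : Fin (m + 2), NBracket m br α N p.1 (Function.update (fun j => α (y j)) k
        (NBracket m br α N p.2 (Fin.snoc x (y k)))) with hc
  have hmap : ∀ p : Fin (m + 2) × Fin (m + 2), p ∈ (Finset.univ : Finset _) →
      ((p.1 : ℕ) + (p.2 : ℕ)) ∈ Finset.range (2 * m + 3) := by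
    intro p _
    rw [Finset.mem_range]
    have h1 := p.1.isLt
    have h2 := p.2.isLt
    omega
  have hfib : ∀ t : K,
      ∑ d ∈ Finset.range (2 * m + 3), t ^ d •
        (∑ p ∈ Finset.univ.filter
          (fun p : Fin (m + 2) × Fin (m + 2) => (p.1 : ℕ) + (p.2 : ℕ) = d), c p) =
      ∑ p : Fin (m + 2) × Fin (m + 2), t ^ ((p.1 : ℕ) + (p.2 : ℕ)) • c p := by
    intro t
    rw [← Finset.sum_fiberwise_of_maps_to hmap (fun p => t ^ ((p.1 : ℕ) + (p.2 : ℕ)) • c p)]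
    refine Finset.sum_congr rfl fun d _ => ?_
    rw [Finset.smul_sum]
    refine Finset.sum_congr rfl fun p hp => ?_
    rw [(Finset.mem_filter.mp hp).2]
  have hvan2h : ∀ t : K,
      α (∑ d ∈ Finset.range (2 * m + 3), t ^ d •
          (∑ p ∈ Finset.univ.filter
            (fun p : Fin (m + 2) × Fin (m + 2) => (p.1 : ℕ) + (p.2 : ℕ) = d), c p)) +
        t • N (∑ d ∈ Finset.range (2 * m + 3), t ^ d •
          (∑ p ∈ Finset.univ.filter
            (fun p : Fin (m + 2) × Fin (m + 2) => (p.1 : ℕ) + (p.2 : ℕ) = d), c p)) = 0 := by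
    intro t
    rw [hfib t, ← auxOmega_sub hg.1 x y t]
    exact auxTvanish hg hN x y t
  have hvan := auxVan2 (α := α) (N := N)
    (fun d => ∑ p ∈ Finset.univ.filter
      (fun p : Fin (m + 2) × Fin (m + 2) => (p.1 : ℕ) + (p.2 : ℕ) = d), c p) hvan2h
  have hzero : (∑ i : Fin (m + 2), lam ^ (i : ℕ) •
        NBracket m br α N i (Fin.snoc (fun i => α (x i))
          (∑ j : Fin (m + 2), lam ^ (j : ℕ) • NBracket m br α N j y))) -
      (∑ k : Fin (m + 2), ∑ i : Fin (m + 2), lam ^ (i : ℕ) •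
        NBracket m br α N i (Function.update (fun j => α (y j)) k
          (∑ j : Fin (m + 2), lam ^ (j : ℕ) • NBracket m br α N j (Fin.snoc x (y k))))) = 0 := by
      rw [auxOmega_sub hg.1 x y lam, ← hfib lam]
      refine Finset.sum_eq_zero fun d hd => ?_
      have := hvan d (Finset.mem_range.mp hd)
      rw [this, smul_zero]
  exact sub_eq_zero.mp hzero

lemma auxNB_upd_add (hbr : IsAltML K (m + 2) br) (i : ℕ) (x : Fin (m + 2) → g)
    (l0 : Fin (m + 2)) (a b : g) :
    NBracket m br α N i (Function.update x l0 (a + b)) =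
      NBracket m br α N i (Function.update x l0 a) +
        NBracket m br α N i (Function.update x l0 b) := by
  simp only [← auxNBml_eq hbr]
  exact (auxNBml α N (auxBrM hbr) i).map_update_add x l0 a b

lemma auxNB_upd_smul (hbr : IsAltML K (m + 2) br) (i : ℕ) (x : Fin (m + 2) → g)
    (l0 : Fin (m + 2)) (cc : K) (a : g) :
    NBracket m br α N i (Function.update x l0 (cc • a)) =
      cc • NBracket m br α N i (Function.update x l0 a) := by
  simp only [← auxNBml_eq hbr]
  exact (auxNBml α N (auxBrM hbr) i).map_update_smul x l0 cc a

end Aux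


/-- a Hom-Nijenhuis operator `N` of an `n`-Hom-Lie algebra `(g, br, α)`
generates an `(n−1)`-order 1-parameter deformation by `ωᵢ = [·,…,·]_N^i`, and this
deformation is trivial: `T_λ = α + λN` satisfies `T_λ∘α = α∘T_λ` and
`T_λ([x₁,…,xₙ]_λ) = [T_λ(x₁),…,T_λ(xₙ)]` for every `λ`. -/
theorem homNijenhuis_generates_trivial_deformation {K g : Type*} [Field K] [CharZero K]
    [AddCommGroup g] [Module K g] (m : ℕ) (br : (Fin (m + 2) → g) → g) (α : g ≃ₗ[K] g)
    (hg : IsNHomLie K m br α) (N : g →ₗ[K] g) (hN : IsHomNijenhuis m br α N) :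
    (∀ lam : K,
      IsNHomLie K m (fun x => ∑ i : Fin (m + 2), lam ^ (i : ℕ) • NBracket m br α N i x) α) ∧
    (∀ (lam : K) (a : g), α (α a) + lam • N (α a) = α (α a + lam • N a)) ∧
    (∀ (lam : K) (x : Fin (m + 2) → g),
      α (∑ i : Fin (m + 2), lam ^ (i : ℕ) • NBracket m br α N i x) +
          lam • N (∑ i : Fin (m + 2), lam ^ (i : ℕ) • NBracket m br α N i x) =
        br (fun l => α (x l) + lam • N (x l))) := by
  have hbr := hg.1
  refine ⟨?_, ?_, ?_⟩
  · intro lam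
    refine ⟨⟨?_, ?_, ?_⟩, ?_, ?_⟩
    · intro x i a b
      simp only [auxNB_upd_add hbr, smul_add, Finset.sum_add_distrib]
    · intro x i cc a
      simp only [auxNB_upd_smul hbr]
      rw [Finset.smul_sum]
      exact Finset.sum_congr rfl fun j _ => smul_comm _ _ _
    · intro x i j hij hxx
      refine Finset.sum_eq_zero fun k _ => ?_
      rw [auxNB_alt hbr _ x i j hij hxx, smul_zero]
    · intro x
      rw [map_sum]
      simp only [map_smul]
      exact Finset.sum_congr rfl fun i _ =>
        congrArg _ (auxNB_alpha hg.2.1 hN.1 _ x).symm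
    · intro x y
      exact auxFI hg hN lam x y
  · intro lam a
    rw [map_add, map_smul, hN.1 a]
  · intro lam x
    exact auxKEY hg hN lam x
end

section
/- Let N be a Hom-Nijenhuis operator of an n-Hom-Lie algebra (g,[·,…,·]_g,α). Then (g,[·,…,·]_N^{n−1},α) is an n-Hom-Lie algebra, and N is a homomorphism of n-Hom-Lie algebras from (g,[·,…,·]_N^{n−1},α) to (g,[·,…,·]_g,α), i.e. N([x₁,…,xₙ]_N^{n−1}) = [N(x₁),…,N(xₙ)]_g and N∘α = α∘N. -/
open Function Finset

set_option linter.unusedSectionVars false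

section Aux1

variable {K g : Type*} [Field K] [AddCommGroup g] [Module K g]

/-- Package an `IsAltML` function as a `MultilinearMap`. -/
def IsAltML.toML {n : ℕ} {f : (Fin n → g) → g} (h : IsAltML K n f) :
    MultilinearMap K (fun _ : Fin n => g) g where
  toFun := f
  map_update_add' := by
    intro dec x i a b
    obtain rfl : dec = instDecidableEqFin n := Subsingleton.elim _ _
    exact h.1 x i a b
  map_update_smul' := by
    intro dec x i c a
    obtain rfl : dec = instDecidableEqFin n := Subsingleton.elim _ _
    exact h.2.1 x i c a

@[simp] lemma IsAltML.toML_apply {n : ℕ} {f : (Fin n → g) → g} (h : IsAltML K n f)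
    (x : Fin n → g) : h.toML x = f x := rfl

/-- Package an `IsAltML` function as an `AlternatingMap`. -/
def IsAltML.toAlt {n : ℕ} {f : (Fin n → g) → g} (h : IsAltML K n f) :
    g [⋀^Fin n]→ₗ[K] g :=
  { h.toML with
    map_eq_zero_of_eq' := fun v i j hv hij => h.2.2 v i j hij hv }

lemma IsAltML.swap {n : ℕ} {f : (Fin n → g) → g} (h : IsAltML K n f)
    {i j : Fin n} (hij : i ≠ j) (v : Fin n → g) :
    f (v ∘ Equiv.swap i j) = - f v :=
  h.toAlt.map_swap v hij

end Aux1

section Aux2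

variable {K g : Type*} [Field K] [AddCommGroup g] [Module K g]
variable (m : ℕ) (br : (Fin (m + 2) → g) → g) (α : g ≃ₗ[K] g) (N : g →ₗ[K] g)

lemma NBracket_zero (x : Fin (m + 2) → g) : NBracket m br α N 0 x = br x := rfl

lemma NBracket_succ (i : ℕ) (x : Fin (m + 2) → g) :
    NBracket m br α N (i + 1) x =
      (∑ S ∈ (Finset.univ : Finset (Fin (m + 2))).powersetCard (i + 1),
          br (fun l => if l ∈ S then N (α.symm (x l)) else x l)) -
        N (NBracket m br α N i (fun l => α.symm (x l))) := rfl

/-- Equivariance of the deformed brackets with respect to `α`. -/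
lemma NB_map_alpha (hcom : ∀ a : g, N (α a) = α (N a))
    (hmul : ∀ x : Fin (m + 2) → g, α (br x) = br (fun i => α (x i))) :
    ∀ (i : ℕ) (x : Fin (m + 2) → g),
      NBracket m br α N i (fun l => α (x l)) = α (NBracket m br α N i x) := by
  intro i
  induction i with
  | zero => intro x; exact (hmul x).symm
  | succ i ih =>
    intro x
    rw [NBracket_succ, NBracket_succ, map_sub, map_sum]
    congr 1
    · refine Finset.sum_congr rfl fun S _ => ?_
      rw [hmul]
      refine congrArg br (funext fun l => ?_)
      by_cases h : l ∈ S
      · simp only [h, if_true]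
        rw [α.symm_apply_apply, ← hcom, α.apply_symm_apply]
      · simp [h]
    · rw [← hcom]
      refine congrArg N ?_
      have e1 : (fun l => α.symm ((fun l' => α (x l')) l)) =
          fun l => α ((fun l' => α.symm (x l')) l) := by
        funext l; simp
      rw [e1, ih]

/-- Under the Hom-Nijenhuis condition the `(m+2)`-nd deformed bracket vanishes. -/
lemma NB_top (hN : IsHomNijenhuis m br α N) (x : Fin (m + 2) → g) :
    NBracket m br α N (m + 2) x = 0 := by
  rw [show m + 2 = (m + 1) + 1 from rfl, NBracket_succ]
  have hcard : (Finset.univ : Finset (Fin (m + 2))).card = m + 2 := by simp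
  have hps : (Finset.univ : Finset (Fin (m + 2))).powersetCard (m + 1 + 1) =
      {Finset.univ} := by
    have := Finset.powersetCard_self (Finset.univ : Finset (Fin (m + 2)))
    rwa [hcard] at this
  rw [hps, Finset.sum_singleton]
  have e : (fun l => if l ∈ (Finset.univ : Finset (Fin (m + 2))) then N (α.symm (x l))
      else x l) = fun l => N ((fun l' => α.symm (x l')) l) := by
    funext l; simp
  rw [e, hN.2]
  simp

end Aux2

section Aux3

variable {K g : Type*} [Field K] [AddCommGroup g] [Module K g]
variable (m : ℕ) (br : (Fin (m + 2) → g) → g) (α : g ≃ₗ[K] g) (N : g →ₗ[K] g)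

lemma update_ite (S : Finset (Fin (m + 2))) (F : g → g) (x : Fin (m + 2) → g)
    (j : Fin (m + 2)) (c : g) :
    (fun l => if l ∈ S then F (Function.update x j c l) else Function.update x j c l) =
      Function.update (fun l => if l ∈ S then F (x l) else x l) j
        (if j ∈ S then F c else c) := by
  funext l
  rcases eq_or_ne l j with rfl | hl
  · simp
  · simp [Function.update_of_ne hl]

lemma symm_update (x : Fin (m + 2) → g) (j : Fin (m + 2)) (c : g) :
    (fun l => α.symm (Function.update x j c l)) =
      Function.update (fun l => α.symm (x l)) j (α.symm c) := by
  funext l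
  rcases eq_or_ne l j with rfl | hl
  · simp
  · simp [Function.update_of_ne hl]

lemma NB_isAltML (h : IsAltML K (m + 2) br) :
    ∀ i : ℕ, IsAltML K (m + 2) (NBracket m br α N i) := by
  intro i
  induction i with
  | zero => exact h
  | succ i ih =>
    refine ⟨?_, ?_, ?_⟩
    · -- additivity
      intro x j a b
      rw [NBracket_succ, NBracket_succ, NBracket_succ]
      have hsum : ∀ c : g,
          (∑ S ∈ (Finset.univ : Finset (Fin (m + 2))).powersetCard (i + 1),
            br (fun l => if l ∈ S then N (α.symm (Function.update x j c l))
              else Function.update x j c l)) =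
          ∑ S ∈ (Finset.univ : Finset (Fin (m + 2))).powersetCard (i + 1),
            br (Function.update (fun l => if l ∈ S then N (α.symm (x l)) else x l) j
              (if j ∈ S then N (α.symm c) else c)) := by
        intro c
        refine Finset.sum_congr rfl fun S _ => ?_
        rw [update_ite m S (fun z => N (α.symm z)) x j c]
      rw [hsum, hsum, hsum]
      have hterm : ∀ S : Finset (Fin (m + 2)),
          br (Function.update (fun l => if l ∈ S then N (α.symm (x l)) else x l) j
            (if j ∈ S then N (α.symm (a + b)) else a + b)) =
          br (Function.update (fun l => if l ∈ S then N (α.symm (x l)) else x l) j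
            (if j ∈ S then N (α.symm a) else a)) +
          br (Function.update (fun l => if l ∈ S then N (α.symm (x l)) else x l) j
            (if j ∈ S then N (α.symm b) else b)) := by
        intro S
        by_cases hj : j ∈ S
        · simp only [hj, if_true]
          rw [map_add, map_add, h.1]
        · simp only [hj, if_false]
          exact h.1 _ j a b
      rw [Finset.sum_congr rfl fun S _ => hterm S, Finset.sum_add_distrib]
      rw [symm_update, symm_update, symm_update, map_add α.symm a b, ih.1, map_add]
      abel
    · -- smul
      intro x j c a
      rw [NBracket_succ, NBracket_succ]
      have hsum : ∀ d : g,
          (∑ S ∈ (Finset.univ : Finset (Fin (m + 2))).powersetCard (i + 1),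
            br (fun l => if l ∈ S then N (α.symm (Function.update x j d l))
              else Function.update x j d l)) =
          ∑ S ∈ (Finset.univ : Finset (Fin (m + 2))).powersetCard (i + 1),
            br (Function.update (fun l => if l ∈ S then N (α.symm (x l)) else x l) j
              (if j ∈ S then N (α.symm d) else d)) := by
        intro d
        refine Finset.sum_congr rfl fun S _ => ?_
        rw [update_ite m S (fun z => N (α.symm z)) x j d]
      rw [hsum, hsum]
      have hterm : ∀ S : Finset (Fin (m + 2)),
          br (Function.update (fun l => if l ∈ S then N (α.symm (x l)) else x l) j
            (if j ∈ S then N (α.symm (c • a)) else c • a)) =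
          c • br (Function.update (fun l => if l ∈ S then N (α.symm (x l)) else x l) j
            (if j ∈ S then N (α.symm a) else a)) := by
        intro S
        by_cases hj : j ∈ S
        · simp only [hj, if_true]
          rw [map_smul, map_smul, h.2.1]
        · simp only [hj, if_false]
          exact h.2.1 _ j c a
      rw [Finset.sum_congr rfl fun S _ => hterm S, ← Finset.smul_sum]
      rw [symm_update, symm_update, map_smul α.symm c a, ih.2.1, map_smul, smul_sub]
    · -- alternating
      intro x i0 j0 hne heq
      rw [NBracket_succ]
      have h2 : NBracket m br α N i (fun l => α.symm (x l)) = 0 := by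
        refine ih.2.2 _ i0 j0 hne ?_
        simp [heq]
      rw [h2, map_zero, sub_zero]
      classical
      have hswap : ∀ (a b : Fin (m + 2)), a ≠ b → x a = x b →
          ∀ S : Finset (Fin (m + 2)), a ∈ S → b ∉ S →
          br (fun l => if l ∈ insert b (S.erase a) then N (α.symm (x l)) else x l) =
            - br (fun l => if l ∈ S then N (α.symm (x l)) else x l) := by
        intro a b hab hxab S haS hbS
        have hfun : (fun l => if l ∈ insert b (S.erase a) then N (α.symm (x l)) else x l) =
            (fun l => if l ∈ S then N (α.symm (x l)) else x l) ∘ Equiv.swap a b := by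
          funext l
          by_cases hla : l = a
          · rw [hla]
            have hnotin : a ∉ insert b (S.erase a) := by
              simp [Finset.mem_insert, hab, Finset.mem_erase]
            simp only [hnotin, if_false, Function.comp_apply, Equiv.swap_apply_left]
            simp [hbS, hxab]
          · by_cases hlb : l = b
            · rw [hlb]
              have hin : b ∈ insert b (S.erase a) := Finset.mem_insert_self _ _
              simp only [hin, if_true, Function.comp_apply, Equiv.swap_apply_right]
              simp [haS, ← hxab]
            · have hmem : (l ∈ insert b (S.erase a)) = (l ∈ S) := by
                simp [Finset.mem_insert, Finset.mem_erase, hla, hlb]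
              simp only [Function.comp_apply, Equiv.swap_apply_of_ne_of_ne hla hlb, hmem]
        rw [hfun]
        exact h.swap hab _
      have hzero : ∀ S : Finset (Fin (m + 2)), (i0 ∈ S ↔ j0 ∈ S) →
          br (fun l => if l ∈ S then N (α.symm (x l)) else x l) = 0 := by
        intro S hiff
        refine h.2.2 _ i0 j0 hne ?_
        by_cases hi : i0 ∈ S
        · simp [hi, hiff.mp hi, heq]
        · have hj : j0 ∉ S := fun hj => hi (hiff.mpr hj)
          simp [hi, hj, heq]
      refine Finset.sum_involution
        (fun S _ => if (i0 ∈ S ↔ j0 ∈ S) then S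
          else if i0 ∈ S then insert j0 (S.erase i0) else insert i0 (S.erase j0))
        ?_ ?_ ?_ ?_
      · intro S _
        by_cases hiff : (i0 ∈ S ↔ j0 ∈ S)
        · simp only [hiff, if_true]
          rw [hzero S hiff]; simp
        · simp only [hiff, if_false]
          by_cases hi : i0 ∈ S
          · have hj : j0 ∉ S := fun hj => hiff ⟨fun _ => hj, fun _ => hi⟩
            simp only [hi, if_true]
            rw [hswap i0 j0 hne heq S hi hj]; simp
          · have hj : j0 ∈ S := by
              by_contra hj
              exact hiff ⟨fun h' => absurd h' hi, fun h' => absurd h' hj⟩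
            simp only [hi, if_false]
            rw [hswap j0 i0 (Ne.symm hne) heq.symm S hj hi]; simp
      · intro S _ hfS
        by_cases hiff : (i0 ∈ S ↔ j0 ∈ S)
        · exact absurd (hzero S hiff) hfS
        · simp only [hiff, if_false]
          by_cases hi : i0 ∈ S
          · have hj : j0 ∉ S := fun hj => hiff ⟨fun _ => hj, fun _ => hi⟩
            simp only [hi, if_true]
            intro hEq
            exact hj (hEq ▸ Finset.mem_insert_self _ _)
          · simp only [hi, if_false]
            intro hEq
            exact hi (hEq ▸ Finset.mem_insert_self _ _)
      · intro S hS
        rw [Finset.mem_powersetCard] at hS ⊢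
        refine ⟨Finset.subset_univ _, ?_⟩
        by_cases hiff : (i0 ∈ S ↔ j0 ∈ S)
        · simpa [hiff] using hS.2
        · simp only [hiff, if_false]
          by_cases hi : i0 ∈ S
          · have hj : j0 ∉ S := fun hj => hiff ⟨fun _ => hj, fun _ => hi⟩
            simp only [hi, if_true]
            rw [Finset.card_insert_of_notMem (by simp [Finset.mem_erase, hj]),
              Finset.card_erase_of_mem hi]
            have : 1 ≤ S.card := Finset.card_pos.mpr ⟨i0, hi⟩
            omega
          · have hj : j0 ∈ S := by
              by_contra hj
              exact hiff ⟨fun h' => absurd h' hi, fun h' => absurd h' hj⟩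
            simp only [hi, if_false]
            rw [Finset.card_insert_of_notMem (by simp [Finset.mem_erase, hi]),
              Finset.card_erase_of_mem hj]
            have : 1 ≤ S.card := Finset.card_pos.mpr ⟨j0, hj⟩
            omega
      · intro S hS
        show (if _ then _ else _) = S
        by_cases hiff : (i0 ∈ S ↔ j0 ∈ S)
        · simp [hiff]
        · simp only [hiff, if_false]
          by_cases hi : i0 ∈ S
          · have hj : j0 ∉ S := fun hj => hiff ⟨fun _ => hj, fun _ => hi⟩
            simp only [hi, if_true]
            have h1 : j0 ∈ insert j0 (S.erase i0) := Finset.mem_insert_self _ _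
            have h2 : i0 ∉ insert j0 (S.erase i0) := by
              simp [Finset.mem_insert, hne, Finset.mem_erase]
            have h3 : ¬ (i0 ∈ insert j0 (S.erase i0) ↔ j0 ∈ insert j0 (S.erase i0)) := by
              simp [h1, h2]
            rw [if_neg h3, if_neg h2]
            rw [Finset.erase_insert (by simp [Finset.mem_erase, hj])]
            exact Finset.insert_erase hi
          · have hj : j0 ∈ S := by
              by_contra hj
              exact hiff ⟨fun h' => absurd h' hi, fun h' => absurd h' hj⟩
            simp only [hi, if_false]
            have h1 : i0 ∈ insert i0 (S.erase j0) := Finset.mem_insert_self _ _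
            have h2 : j0 ∉ insert i0 (S.erase j0) := by
              simp [Finset.mem_insert, Ne.symm hne, Finset.mem_erase]
            have h3 : ¬ (i0 ∈ insert i0 (S.erase j0) ↔ j0 ∈ insert i0 (S.erase j0)) := by
              simp [h1, h2]
            rw [if_neg h3, if_pos h1]
            rw [Finset.erase_insert (by simp [Finset.mem_erase, hi])]
            exact Finset.insert_erase hj

end Aux3

section Aux4

variable {K g : Type*} [Field K] [AddCommGroup g] [Module K g]
variable (m : ℕ) (br : (Fin (m + 2) → g) → g) (α : g ≃ₗ[K] g) (N : g →ₗ[K] g)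

/-- The key identity: `br ((α + tN) x) = (α + tN) (B_t x)` where
`B_t = ∑ t^k NB^k`. Uses the Nijenhuis condition through `NB_top`. -/
lemma NB_key (hg : IsNHomLie K m br α) (hN : IsHomNijenhuis m br α N)
    (t : K) (x : Fin (m + 2) → g) :
    br (fun l => α (x l) + t • N (x l)) =
      α (∑ k ∈ range (m + 2), t ^ k • NBracket m br α N k x) +
        t • N (∑ k ∈ range (m + 2), t ^ k • NBracket m br α N k x) := by
  classical
  have step1 : br (fun l => α (x l) + t • N (x l)) =
      ∑ S : Finset (Fin (m + 2)),
        t ^ S.card • br (fun l => if l ∈ S then N (x l) else α (x l)) := by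
    have e1 : (fun l => α (x l) + t • N (x l)) =
        (fun l => t • N (x l)) + (fun l => α (x l)) := by
      funext l; simp [add_comm]
    have e2 := hg.1.toML.map_add_univ (fun l => t • N (x l)) (fun l => α (x l))
    rw [show br (fun l => α (x l) + t • N (x l)) =
        hg.1.toML ((fun l => t • N (x l)) + (fun l => α (x l))) from by
      rw [IsAltML.toML_apply, ← e1], e2]
    refine Finset.sum_congr rfl fun S _ => ?_
    set w : Fin (m + 2) → g := S.piecewise (fun l => N (x l)) (fun l => α (x l)) with hw
    have e3 : S.piecewise (fun l => t • N (x l)) (fun l => α (x l)) =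
        S.piecewise (fun l => t • w l) w := by
      funext l
      by_cases hl : l ∈ S <;>
        simp [Finset.piecewise_eq_of_mem, Finset.piecewise_eq_of_notMem, hl, hw]
    rw [e3]
    have e4 := hg.1.toML.map_piecewise_smul (fun _ => t) w S
    simp only [IsAltML.toML_apply] at e4 ⊢
    rw [e4, Finset.prod_const]
    have e5 : w = fun l => if l ∈ S then N (x l) else α (x l) := by
      funext l
      by_cases hl : l ∈ S <;>
        simp [Finset.piecewise_eq_of_mem, Finset.piecewise_eq_of_notMem, hl, hw]
    rw [e5]
  -- group by cardinality
  have step2 : (∑ S : Finset (Fin (m + 2)),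
        t ^ S.card • br (fun l => if l ∈ S then N (x l) else α (x l))) =
      ∑ k ∈ range (m + 2 + 1), t ^ k •
        ∑ S ∈ (Finset.univ : Finset (Fin (m + 2))).powersetCard k,
          br (fun l => if l ∈ S then N (x l) else α (x l)) := by
    rw [← Finset.powerset_univ, Finset.powerset_card_disjiUnion]
    erw [Finset.sum_disjiUnion]
    rw [show (Finset.univ : Finset (Fin (m + 2))).card = m + 2 by simp]
    refine Finset.sum_congr rfl fun k _ => ?_
    rw [Finset.smul_sum]
    refine Finset.sum_congr rfl fun S hS => ?_
    rw [(Finset.mem_powersetCard.mp hS).2]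
  -- identify the inner sums
  have hG0 : (∑ S ∈ (Finset.univ : Finset (Fin (m + 2))).powersetCard 0,
      br (fun l => if l ∈ S then N (x l) else α (x l))) =
      α (NBracket m br α N 0 x) := by
    rw [Finset.powersetCard_zero, Finset.sum_singleton]
    rw [NBracket_zero, hg.2.1]
    refine congrArg br (funext fun l => ?_)
    simp
  have hGsucc : ∀ k : ℕ, (∑ S ∈ (Finset.univ : Finset (Fin (m + 2))).powersetCard (k + 1),
      br (fun l => if l ∈ S then N (x l) else α (x l))) =
      α (NBracket m br α N (k + 1) x) + N (NBracket m br α N k x) := by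
    intro k
    have e1 := NB_map_alpha m br α N hN.1 hg.2.1 (k + 1) x
    rw [NBracket_succ] at e1
    have e2 : (∑ S ∈ (Finset.univ : Finset (Fin (m + 2))).powersetCard (k + 1),
        br fun l => if l ∈ S then N (α.symm ((fun l' => α (x l')) l))
          else (fun l' => α (x l')) l) =
        ∑ S ∈ (Finset.univ : Finset (Fin (m + 2))).powersetCard (k + 1),
          br (fun l => if l ∈ S then N (x l) else α (x l)) := by
      refine Finset.sum_congr rfl fun S _ => congrArg br (funext fun l => ?_)
      by_cases hl : l ∈ S <;> simp [hl]
    have e3 : NBracket m br α N k (fun l => α.symm ((fun l' => α (x l')) l)) =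
        NBracket m br α N k x := by
      refine congrArg _ (funext fun l => ?_)
      simp
    rw [e2, e3] at e1
    rw [← e1]
    abel
  rw [step1, step2]
  rw [Finset.sum_range_succ']
  have e6 : ∀ k ∈ range (m + 2), t ^ (k + 1) •
      (∑ S ∈ (Finset.univ : Finset (Fin (m + 2))).powersetCard (k + 1),
        br (fun l => if l ∈ S then N (x l) else α (x l))) =
      t ^ (k + 1) • α (NBracket m br α N (k + 1) x) +
        t ^ (k + 1) • N (NBracket m br α N k x) := by
    intro k _
    rw [hGsucc k, smul_add]
  rw [Finset.sum_congr rfl e6, Finset.sum_add_distrib, hG0]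
  have e7 : (∑ k ∈ range (m + 2), t ^ (k + 1) • α (NBracket m br α N (k + 1) x)) +
      t ^ 0 • α (NBracket m br α N 0 x) =
      α (∑ k ∈ range (m + 2), t ^ k • NBracket m br α N k x) := by
    rw [map_sum]
    have : ∀ k ∈ range (m + 2), t ^ k • α (NBracket m br α N k x) =
        α (t ^ k • NBracket m br α N k x) := fun k _ => (map_smul α _ _).symm
    rw [← Finset.sum_congr rfl this]
    rw [← Finset.sum_range_succ' (fun k => t ^ k • α (NBracket m br α N k x)) (m + 2)]
    rw [Finset.sum_range_succ (fun k => t ^ k • α (NBracket m br α N k x)) (m + 2)]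
    rw [NB_top m br α N hN, map_zero, smul_zero, add_zero]
  have e8 : (∑ k ∈ range (m + 2), t ^ (k + 1) • N (NBracket m br α N k x)) =
      t • N (∑ k ∈ range (m + 2), t ^ k • NBracket m br α N k x) := by
    rw [map_sum, Finset.smul_sum]
    refine Finset.sum_congr rfl fun k _ => ?_
    rw [map_smul, pow_succ', mul_smul]
  rw [e8, ← e7]
  abel

end Aux4

section Aux5

variable {K g : Type*} [Field K] [CharZero K] [AddCommGroup g] [Module K g]

/-- If a `g`-valued polynomial function vanishes identically, its coefficients vanish. -/
lemma poly_coeffs_zero {M : ℕ} (d : ℕ → g)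
    (h : ∀ t : K, ∑ r ∈ range M, t ^ r • d r = 0) :
    ∀ r, r < M → d r = 0 := by
  intro r hr
  rw [← Module.forall_dual_apply_eq_zero_iff K (d r)]
  intro f
  have hp : (∑ r' ∈ range M, Polynomial.C (f (d r')) * Polynomial.X ^ r' :
      Polynomial K) = 0 := by
    apply Polynomial.zero_of_eval_zero
    intro t
    have h2 := congrArg f (h t)
    simp only [map_sum, map_smul, map_zero, smul_eq_mul] at h2
    rw [Polynomial.eval_finset_sum]
    simp only [Polynomial.eval_mul, Polynomial.eval_C, Polynomial.eval_pow, Polynomial.eval_X]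
    rw [← h2]
    exact Finset.sum_congr rfl fun _ _ => mul_comm _ _
  have h3 := congrArg (fun p => Polynomial.coeff p r) hp
  simp only [Polynomial.finset_sum_coeff, Polynomial.coeff_C_mul, Polynomial.coeff_X_pow,
    Polynomial.coeff_zero, mul_ite, mul_one, mul_zero] at h3
  rwa [Finset.sum_ite_eq (range M) r (fun r' => f (d r')), if_pos (mem_range.mpr hr)] at h3

end Aux5

section Aux6

variable {K g : Type*} [Field K] [CharZero K] [AddCommGroup g] [Module K g]
variable (m : ℕ) (br : (Fin (m + 2) → g) → g) (α : g ≃ₗ[K] g) (N : g →ₗ[K] g)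

lemma NB_FI (hg : IsNHomLie K m br α) (hN : IsHomNijenhuis m br α N)
    (x : Fin (m + 1) → g) (y : Fin (m + 2) → g) :
    NBracket m br α N (m + 1) (Fin.snoc (fun i => α (x i)) (NBracket m br α N (m + 1) y)) =
      ∑ i : Fin (m + 2), NBracket m br α N (m + 1)
        (Function.update (fun j => α (y j)) i (NBracket m br α N (m + 1) (Fin.snoc x (y i)))) := by
  classical
  obtain ⟨C2, hC2⟩ : ∃ C2 : ℕ → ℕ → g, ∀ k j, C2 k j =
      NBracket m br α N k (Fin.snoc (fun i => α (x i)) (NBracket m br α N j y)) -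
        ∑ i : Fin (m + 2), NBracket m br α N k
          (Function.update (fun j' => α (y j')) i (NBracket m br α N j (Fin.snoc x (y i)))) :=
    ⟨_, fun _ _ => rfl⟩
  -- multilinearity helpers
  have upd_sum : ∀ (k : ℕ) (z : Fin (m + 2) → g) (i : Fin (m + 2)) (s : Finset ℕ)
      (F : ℕ → g), NBracket m br α N k (Function.update z i (∑ j ∈ s, F j)) =
        ∑ j ∈ s, NBracket m br α N k (Function.update z i (F j)) := by
    intro k z i s F
    exact (NB_isAltML m br α N hg.1 k).toML.map_update_sum s i F z
  have upd_smul : ∀ (k : ℕ) (z : Fin (m + 2) → g) (i : Fin (m + 2)) (c : K) (a : g),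
      NBracket m br α N k (Function.update z i (c • a)) =
        c • NBracket m br α N k (Function.update z i a) :=
    fun k z i c a => (NB_isAltML m br α N hg.1 k).2.1 z i c a
  have snoc_upd : ∀ (u : Fin (m + 1) → g) (c : g),
      (Fin.snoc u c : Fin (m + 2) → g) =
        Function.update (Fin.snoc u (0 : g) : Fin (m + 2) → g) (Fin.last (m + 1)) c := by
    intro u c
    exact (@Fin.update_snoc_last (m + 1) (fun _ => g) (0 : g) u c).symm
  have snoc_sum : ∀ (k : ℕ) (u : Fin (m + 1) → g) (s : Finset ℕ) (F : ℕ → g),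
      NBracket m br α N k (Fin.snoc u (∑ j ∈ s, F j)) =
        ∑ j ∈ s, NBracket m br α N k (Fin.snoc u (F j)) := by
    intro k u s F
    rw [snoc_upd, upd_sum]
    exact Finset.sum_congr rfl fun j _ => by rw [← snoc_upd]
  have snoc_smul : ∀ (k : ℕ) (u : Fin (m + 1) → g) (c : K) (a : g),
      NBracket m br α N k (Fin.snoc u (c • a)) =
        c • NBracket m br α N k (Fin.snoc u a) := by
    intro k u c a
    rw [snoc_upd, upd_smul, ← snoc_upd]
  -- main vanishing identity
  have hDt : ∀ t : K,
      α (∑ k ∈ range (m + 2), ∑ j ∈ range (m + 2), t ^ (k + j) • C2 k j) +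
        t • N (∑ k ∈ range (m + 2), ∑ j ∈ range (m + 2), t ^ (k + j) • C2 k j) = 0 := by
    intro t
    have claim1 : (∑ k ∈ range (m + 2), ∑ j ∈ range (m + 2), t ^ (k + j) • C2 k j) =
        (∑ k ∈ range (m + 2), t ^ k • NBracket m br α N k
          (Fin.snoc (fun i => α (x i)) (∑ j ∈ range (m + 2), t ^ j • NBracket m br α N j y))) -
        ∑ i : Fin (m + 2), ∑ k ∈ range (m + 2), t ^ k • NBracket m br α N k
          (Function.update (fun j' => α (y j')) i
            (∑ j ∈ range (m + 2), t ^ j • NBracket m br α N j (Fin.snoc x (y i)))) := by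
      have e1 : (∑ k ∈ range (m + 2), t ^ k • NBracket m br α N k
          (Fin.snoc (fun i => α (x i)) (∑ j ∈ range (m + 2), t ^ j • NBracket m br α N j y))) =
          ∑ k ∈ range (m + 2), ∑ j ∈ range (m + 2), t ^ (k + j) •
            NBracket m br α N k (Fin.snoc (fun i => α (x i)) (NBracket m br α N j y)) := by
        refine Finset.sum_congr rfl fun k _ => ?_
        rw [snoc_sum, Finset.smul_sum]
        refine Finset.sum_congr rfl fun j _ => ?_
        rw [snoc_smul, smul_smul, ← pow_add]
      have e2 : ∀ i : Fin (m + 2), (∑ k ∈ range (m + 2), t ^ k • NBracket m br α N k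
          (Function.update (fun j' => α (y j')) i
            (∑ j ∈ range (m + 2), t ^ j • NBracket m br α N j (Fin.snoc x (y i))))) =
          ∑ k ∈ range (m + 2), ∑ j ∈ range (m + 2), t ^ (k + j) •
            NBracket m br α N k (Function.update (fun j' => α (y j')) i
              (NBracket m br α N j (Fin.snoc x (y i)))) := by
        intro i
        refine Finset.sum_congr rfl fun k _ => ?_
        rw [upd_sum, Finset.smul_sum]
        refine Finset.sum_congr rfl fun j _ => ?_
        rw [upd_smul, smul_smul, ← pow_add]
      rw [e1, Finset.sum_congr rfl fun i _ => e2 i]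
      simp only [hC2]
      simp only [smul_sub, Finset.sum_sub_distrib, Finset.smul_sum]
      congr 1
      have swapa : (∑ k ∈ range (m + 2), ∑ j ∈ range (m + 2), ∑ i : Fin (m + 2),
          t ^ (k + j) • NBracket m br α N k (Function.update (fun j' => α (y j')) i
            (NBracket m br α N j (Fin.snoc x (y i))))) =
          ∑ k ∈ range (m + 2), ∑ i : Fin (m + 2), ∑ j ∈ range (m + 2),
          t ^ (k + j) • NBracket m br α N k (Function.update (fun j' => α (y j')) i
            (NBracket m br α N j (Fin.snoc x (y i)))) :=
        Finset.sum_congr rfl fun k _ => Finset.sum_comm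
      rw [swapa, Finset.sum_comm]
    -- now use the fundamental identity of `br` together with NB_key
    have key : ∀ z : Fin (m + 2) → g, br (fun l => α (z l) + t • N (z l)) =
        α (∑ k ∈ range (m + 2), t ^ k • NBracket m br α N k z) +
          t • N (∑ k ∈ range (m + 2), t ^ k • NBracket m br α N k z) :=
      fun z => NB_key m br α N hg hN t z
    have FI := hg.2.2 (fun i => α (x i) + t • N (x i)) (fun i => α (y i) + t • N (y i))
    -- rewrite the left-hand side of FI
    have lhs1 : (fun i => α ((fun i' => α (x i') + t • N (x i')) i)) =
        fun i => α (α (x i)) + t • N (α (x i)) := by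
      funext i
      rw [map_add, map_smul, (hN.1 (x i)).symm]
    have lhs2 : Fin.snoc (fun i => α (α (x i)) + t • N (α (x i)))
        (α (∑ k ∈ range (m + 2), t ^ k • NBracket m br α N k y) +
          t • N (∑ k ∈ range (m + 2), t ^ k • NBracket m br α N k y)) =
        fun l => α ((Fin.snoc (fun i => α (x i))
          (∑ k ∈ range (m + 2), t ^ k • NBracket m br α N k y) : Fin (m + 2) → g) l) +
          t • N ((Fin.snoc (fun i => α (x i))
            (∑ k ∈ range (m + 2), t ^ k • NBracket m br α N k y) : Fin (m + 2) → g) l) := by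
      funext l
      refine Fin.lastCases ?_ (fun i => ?_) l
      · simp only [Fin.snoc_last]
      · simp only [Fin.snoc_castSucc]
    -- rewrite each term on the right-hand side of FI
    have rhs1 : ∀ i : Fin (m + 2),
        Fin.snoc (fun i' => α (x i') + t • N (x i')) (α (y i) + t • N (y i)) =
          fun l => α ((Fin.snoc x (y i) : Fin (m + 2) → g) l) +
            t • N ((Fin.snoc x (y i) : Fin (m + 2) → g) l) := by
      intro i
      funext l
      refine Fin.lastCases ?_ (fun i' => ?_) l
      · simp only [Fin.snoc_last]
      · simp only [Fin.snoc_castSucc]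
    have rhs2 : ∀ i : Fin (m + 2),
        Function.update (fun j => α (α (y j) + t • N (y j))) i
          (α (∑ k ∈ range (m + 2), t ^ k • NBracket m br α N k (Fin.snoc x (y i))) +
            t • N (∑ k ∈ range (m + 2), t ^ k • NBracket m br α N k (Fin.snoc x (y i)))) =
          fun l => α (Function.update (fun j' => α (y j')) i
              (∑ k ∈ range (m + 2), t ^ k • NBracket m br α N k (Fin.snoc x (y i))) l) +
            t • N (Function.update (fun j' => α (y j')) i
              (∑ k ∈ range (m + 2), t ^ k • NBracket m br α N k (Fin.snoc x (y i))) l) := by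
      intro i
      funext l
      rcases eq_or_ne l i with rfl | hl
      · simp only [Function.update_self]
      · simp only [Function.update_of_ne hl]
        rw [map_add, map_smul, (hN.1 (y l)).symm]
    rw [key, lhs1, lhs2, key] at FI
    have FIr : ∀ i : Fin (m + 2),
        br (Function.update (fun j => α (α (y j) + t • N (y j))) i
          (br (Fin.snoc (fun i' => α (x i') + t • N (x i')) (α (y i) + t • N (y i))))) =
        α (∑ k ∈ range (m + 2), t ^ k • NBracket m br α N k
            (Function.update (fun j' => α (y j')) i
              (∑ j ∈ range (m + 2), t ^ j • NBracket m br α N j (Fin.snoc x (y i))))) +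
          t • N (∑ k ∈ range (m + 2), t ^ k • NBracket m br α N k
            (Function.update (fun j' => α (y j')) i
              (∑ j ∈ range (m + 2), t ^ j • NBracket m br α N j (Fin.snoc x (y i))))) := by
      intro i
      have h1 : br (Fin.snoc (fun i' => α (x i') + t • N (x i'))
          (α (y i) + t • N (y i))) =
          α (∑ k ∈ range (m + 2), t ^ k • NBracket m br α N k (Fin.snoc x (y i))) +
            t • N (∑ k ∈ range (m + 2), t ^ k • NBracket m br α N k (Fin.snoc x (y i))) := by
        rw [rhs1 i, key]
      rw [h1, rhs2 i, key]
    rw [Finset.sum_congr rfl fun i _ => FIr i] at FI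
    -- FI now says R (Bt W) = ∑ i R (Bt Vi); reorganize
    rw [Finset.sum_add_distrib, ← map_sum, ← Finset.smul_sum, ← map_sum] at FI
    rw [claim1, map_sub, map_sub, smul_sub, sub_add_sub_comm, FI, sub_self]
  -- extract coefficients
  obtain ⟨c1, hc1⟩ : ∃ c1 : ℕ → g, ∀ r, c1 r = ∑ k ∈ range (m + 2), ∑ j ∈ range (m + 2),
      if k + j = r then C2 k j else 0 := ⟨_, fun _ => rfl⟩
  have hpoly : ∀ t : K, (∑ k ∈ range (m + 2), ∑ j ∈ range (m + 2), t ^ (k + j) • C2 k j) =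
      ∑ r ∈ range (2 * m + 3), t ^ r • c1 r := by
    intro t
    calc (∑ k ∈ range (m + 2), ∑ j ∈ range (m + 2), t ^ (k + j) • C2 k j)
        = ∑ k ∈ range (m + 2), ∑ j ∈ range (m + 2), ∑ r ∈ range (2 * m + 3),
            (if k + j = r then t ^ r • C2 k j else 0) := by
          refine Finset.sum_congr rfl fun k hk => Finset.sum_congr rfl fun j hj => ?_
          rw [Finset.sum_ite_eq (range (2 * m + 3)) (k + j) (fun r => t ^ r • C2 k j),
            if_pos (mem_range.mpr (by simp only [mem_range] at hk hj; omega))]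
      _ = ∑ k ∈ range (m + 2), ∑ r ∈ range (2 * m + 3), ∑ j ∈ range (m + 2),
            (if k + j = r then t ^ r • C2 k j else 0) :=
          Finset.sum_congr rfl fun k _ => Finset.sum_comm
      _ = ∑ r ∈ range (2 * m + 3), ∑ k ∈ range (m + 2), ∑ j ∈ range (m + 2),
            (if k + j = r then t ^ r • C2 k j else 0) := Finset.sum_comm
      _ = ∑ r ∈ range (2 * m + 3), t ^ r • c1 r := by
          refine Finset.sum_congr rfl fun r _ => ?_
          rw [hc1 r, Finset.smul_sum]
          refine Finset.sum_congr rfl fun k _ => ?_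
          rw [Finset.smul_sum]
          refine Finset.sum_congr rfl fun j _ => ?_
          rw [smul_ite, smul_zero]
  have hc1big : ∀ r, 2 * m + 3 ≤ r → c1 r = 0 := by
    intro r hr
    rw [hc1 r]
    refine Finset.sum_eq_zero fun k hk => Finset.sum_eq_zero fun j hj => ?_
    simp only [mem_range] at hk hj
    rw [if_neg (by omega)]
  have hE : ∀ t : K, ∑ r ∈ range (2 * m + 4),
      t ^ r • (α (c1 r) + if r = 0 then 0 else N (c1 (r - 1))) = 0 := by
    intro t
    simp only [smul_add, Finset.sum_add_distrib]
    have eA : (∑ r ∈ range (2 * m + 4), t ^ r • α (c1 r)) =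
        α (∑ k ∈ range (m + 2), ∑ j ∈ range (m + 2), t ^ (k + j) • C2 k j) := by
      rw [Finset.sum_range_succ, hc1big (2 * m + 3) le_rfl, map_zero, smul_zero, add_zero]
      rw [hpoly, map_sum]
      exact Finset.sum_congr rfl fun r _ => (map_smul α _ _).symm
    have eB : (∑ r ∈ range (2 * m + 4), t ^ r • if r = 0 then (0 : g) else N (c1 (r - 1))) =
        t • N (∑ k ∈ range (m + 2), ∑ j ∈ range (m + 2), t ^ (k + j) • C2 k j) := by
      rw [Finset.sum_range_succ'
        (fun r => t ^ r • if r = 0 then (0 : g) else N (c1 (r - 1))) (2 * m + 3)]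
      have hz : (t ^ 0 • if (0 : ℕ) = 0 then (0 : g) else N (c1 (0 - 1))) = 0 := by simp
      rw [hz, add_zero]
      have hterm : ∀ r ∈ range (2 * m + 3),
          (t ^ (r + 1) • if r + 1 = 0 then (0 : g) else N (c1 (r + 1 - 1))) =
            t • (t ^ r • N (c1 r)) := by
        intro r _
        rw [if_neg (Nat.succ_ne_zero r), Nat.add_sub_cancel, pow_succ', mul_smul]
      rw [Finset.sum_congr rfl hterm, ← Finset.smul_sum, hpoly, map_sum]
      congr 1
      exact Finset.sum_congr rfl fun r _ => (map_smul N _ _).symm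
    rw [eA, eB]
    exact hDt t
  have hcoef := poly_coeffs_zero
    (fun r => α (c1 r) + if r = 0 then 0 else N (c1 (r - 1))) hE
  have hc1zero : ∀ r, r ≤ 2 * m + 2 → c1 r = 0 := by
    intro r
    induction r with
    | zero =>
      intro _
      have h0 := hcoef 0 (by omega)
      simp only [] at h0
      rw [if_pos trivial, add_zero] at h0
      exact (LinearEquiv.map_eq_zero_iff α).mp h0
    | succ s ih =>
      intro hs
      have h0 := hcoef (s + 1) (by omega)
      simp only [Nat.succ_ne_zero, if_false, Nat.add_sub_cancel] at h0
      rw [ih (by omega), map_zero, add_zero] at h0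
      exact (LinearEquiv.map_eq_zero_iff α).mp h0
  have h22 := hc1zero (2 * m + 2) le_rfl
  rw [hc1 (2 * m + 2)] at h22
  have hsingle : (∑ k ∈ range (m + 2), ∑ j ∈ range (m + 2),
      if k + j = 2 * m + 2 then C2 k j else 0) = C2 (m + 1) (m + 1) := by
    rw [Finset.sum_eq_single (m + 1)]
    · rw [Finset.sum_eq_single (m + 1)]
      · rw [if_pos (by omega)]
      · intro j hj hne
        simp only [mem_range] at hj
        rw [if_neg (by omega)]
      · intro hnot
        exact absurd (mem_range.mpr (by omega)) hnot
    · intro k hk hne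
      simp only [mem_range] at hk
      refine Finset.sum_eq_zero fun j hj => ?_
      simp only [mem_range] at hj
      rw [if_neg (by omega)]
    · intro hnot
      exact absurd (mem_range.mpr (by omega)) hnot
  rw [hsingle, hC2] at h22
  exact sub_eq_zero.mp h22

end Aux6

/-- if `N` is a Hom-Nijenhuis operator of the `n`-Hom-Lie algebra
`(g, br, α)`, then `(g, [·,…,·]_N^{n−1}, α)` is an `n`-Hom-Lie algebra and `N` is a
homomorphism of `n`-Hom-Lie algebras from `(g, [·,…,·]_N^{n−1}, α)` to `(g, br, α)`. -/
theorem homNijenhuis_deformed_bracket {K g : Type*} [Field K] [CharZero K]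
    [AddCommGroup g] [Module K g] (m : ℕ) (br : (Fin (m + 2) → g) → g) (α : g ≃ₗ[K] g)
    (hg : IsNHomLie K m br α) (N : g →ₗ[K] g) (hN : IsHomNijenhuis m br α N) :
    IsNHomLie K m (NBracket m br α N (m + 1)) α ∧
    (∀ x : Fin (m + 2) → g,
      N (NBracket m br α N (m + 1) x) = br (fun l => N (x l))) ∧
    (∀ a : g, N (α a) = α (N a)) := by
  refine ⟨⟨NB_isAltML m br α N hg.1 (m + 1),
    fun x => (NB_map_alpha m br α N hN.1 hg.2.1 (m + 1) x).symm,
    fun x y => NB_FI m br α N hg hN x y⟩,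
    fun x => (hN.2 x).symm, hN.1⟩
end

section
/- Let (g,[·,…,·]_g,α) be an n-Hom-Lie algebra and (V,ρ,β) a representation. A linear map T : V → g is a Hom-O-operator if and only if the linear map T̄ : g⊕V → g⊕V defined by T̄(x+v) = T(v) is a Hom-Nijenhuis operator of the semidirect product n-Hom-Lie algebra (g⊕V, [·,…,·]_ρ, α+β). -/
open Function Finset

/-- A Hom-`𝒪`-operator `T : V → g` associated to a representation `(V, ρ, β)` of the
`n`-Hom-Lie algebra `(g, br, α)`. -/
def IsHomOOperator {K g V : Type*} [Field K] [AddCommGroup g] [Module K g]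
    [AddCommGroup V] [Module K V] (m : ℕ) (br : (Fin (m + 2) → g) → g) (α : g ≃ₗ[K] g)
    (ρ : (Fin (m + 1) → g) → Module.End K V) (β : V ≃ₗ[K] V) (T : V →ₗ[K] g) : Prop :=
  (∀ v : V, T (β v) = α (T v)) ∧
  (∀ v : Fin (m + 2) → V,
    br (fun l => T (v l)) =
      T (∑ i : Fin (m + 2),
        ((-1 : K) ^ (m + (i : ℕ) + 1)) •
          (ρ (fun j => T (β.symm (v (i.succAbove j))))) (v i)))

/-- a linear map `T : V → g` is a Hom-`𝒪`-operator if and only if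
`T̄ : g ⊕ V → g ⊕ V`, `T̄(x + v) = T(v)`, is a Hom-Nijenhuis operator of the semidirect
product `n`-Hom-Lie algebra `(g ⊕ V, [·,…,·]_ρ, α + β)`. -/
theorem homOOperator_iff_homNijenhuis {K g V : Type*} [Field K] [CharZero K]
    [AddCommGroup g] [Module K g] [AddCommGroup V] [Module K V] (m : ℕ)
    (br : (Fin (m + 2) → g) → g) (α : g ≃ₗ[K] g)
    (ρ : (Fin (m + 1) → g) → Module.End K V) (β : V ≃ₗ[K] V)
    (hg : IsNHomLie K m br α) (hρ : IsRep K m br α ρ β) (T : V →ₗ[K] g) :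
    IsHomOOperator m br α ρ β T ↔
      IsHomNijenhuis m (sdBracket m br ρ) (α.prodCongr β)
        ((LinearMap.inl K g V) ∘ₗ T ∘ₗ (LinearMap.snd K g V)) := by
  classical
  set φ : (g × V) ≃ₗ[K] (g × V) := α.prodCongr β with hφ
  set N : (g × V) →ₗ[K] (g × V) :=
    (LinearMap.inl K g V) ∘ₗ T ∘ₗ (LinearMap.snd K g V) with hNdef
  have hNapp : ∀ w : g × V, N w = (T w.2, 0) := fun w => rfl
  have hφapp : ∀ w : g × V, φ w = (α w.1, β w.2) := fun w => rfl
  have hφsymm : ∀ w : g × V, φ.symm w = (α.symm w.1, β.symm w.2) := fun w => rfl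
  -- the powersetCard (m+1) subsets of Fin (m+2) are complements of singletons
  have hps : (Finset.univ : Finset (Fin (m + 2))).powersetCard (m + 1) =
      Finset.univ.image (fun i : Fin (m + 2) => ({i}ᶜ : Finset (Fin (m + 2)))) := by
    ext S
    simp only [Finset.mem_powersetCard_univ, Finset.mem_image, Finset.mem_univ, true_and]
    constructor
    · intro hS
      have hc : Sᶜ.card = 1 := by
        have := Finset.card_compl S
        rw [Fintype.card_fin] at this
        omega
      obtain ⟨i, hi⟩ := Finset.card_eq_one.mp hc
      exact ⟨i, by rw [← hi, compl_compl]⟩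
    · rintro ⟨i, rfl⟩
      rw [Finset.card_compl, Finset.card_singleton, Fintype.card_fin]
      omega
  have hinj : ∀ a ∈ (Finset.univ : Finset (Fin (m + 2))),
      ∀ b ∈ (Finset.univ : Finset (Fin (m + 2))),
      ({a}ᶜ : Finset (Fin (m + 2))) = {b}ᶜ → a = b := by
    intro a _ b _ h
    have := compl_injective h
    simpa using this
  -- key computation: N applied to the (m+1)-st deformed bracket
  have key : ∀ z : Fin (m + 2) → g × V,
      N (NBracket m (sdBracket m br ρ) φ N (m + 1) z) =
        (T (∑ i : Fin (m + 2),
          ((-1 : K) ^ (m + (i : ℕ) + 1)) •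
            (ρ (fun j => T (β.symm (z (i.succAbove j)).2))) ((z i).2)), 0) := by
    intro z
    have hunfold : NBracket m (sdBracket m br ρ) φ N (m + 1) z =
        (∑ S ∈ (Finset.univ : Finset (Fin (m + 2))).powersetCard (m + 1),
            sdBracket m br ρ (fun l => if l ∈ S then N (φ.symm (z l)) else z l)) -
          N (NBracket m (sdBracket m br ρ) φ N m (fun l => φ.symm (z l))) := rfl
    rw [hunfold, map_sub]
    have hNN : N (N (NBracket m (sdBracket m br ρ) φ N m (fun l => φ.symm (z l)))) = 0 := by
      rw [hNapp, hNapp]; simp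
    rw [hNN, sub_zero, hNapp]
    congr 1
    -- compute the second component of the sum
    have h2 : (∑ S ∈ (Finset.univ : Finset (Fin (m + 2))).powersetCard (m + 1),
        sdBracket m br ρ (fun l => if l ∈ S then N (φ.symm (z l)) else z l)).2 =
        ∑ S ∈ (Finset.univ : Finset (Fin (m + 2))).powersetCard (m + 1),
          (sdBracket m br ρ (fun l => if l ∈ S then N (φ.symm (z l)) else z l)).2 := by
      exact Prod.snd_sum
    rw [h2, hps, Finset.sum_image hinj]
    congr 1
    refine Finset.sum_congr rfl fun i _ => ?_
    -- for S = {i}ᶜ, the V-component collapses to a single term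
    have hterm : (sdBracket m br ρ
        (fun l => if l ∈ ({i}ᶜ : Finset (Fin (m + 2))) then N (φ.symm (z l)) else z l)).2 =
        ∑ k : Fin (m + 2), ((-1 : K) ^ (m + (k : ℕ) + 1)) •
          (ρ (fun j => (if k.succAbove j ∈ ({i}ᶜ : Finset (Fin (m + 2))) then
              N (φ.symm (z (k.succAbove j))) else z (k.succAbove j)).1))
            ((if k ∈ ({i}ᶜ : Finset (Fin (m + 2))) then N (φ.symm (z k)) else z k).2) := rfl
    rw [hterm]
    rw [Fintype.sum_eq_single i]
    · have hii : i ∉ ({i}ᶜ : Finset (Fin (m + 2))) := by simp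
      rw [if_neg hii]
      have harg : (fun j => (if i.succAbove j ∈ ({i}ᶜ : Finset (Fin (m + 2))) then
          N (φ.symm (z (i.succAbove j))) else z (i.succAbove j)).1) =
          fun j => T (β.symm (z (i.succAbove j)).2) := by
        funext j
        have hne : i.succAbove j ∈ ({i}ᶜ : Finset (Fin (m + 2))) := by
          simp [Fin.succAbove_ne]
        rw [if_pos hne, hNapp, hφsymm]
      rw [harg]
    · intro k hk
      have hkmem : k ∈ ({i}ᶜ : Finset (Fin (m + 2))) := by simpa using hk
      rw [if_pos hkmem, hNapp]
      simp
  -- the semidirect bracket of N-images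
  have hbrN : ∀ z : Fin (m + 2) → g × V,
      sdBracket m br ρ (fun l => N (z l)) = (br (fun l => T (z l).2), 0) := by
    intro z
    have : sdBracket m br ρ (fun l => N (z l)) =
        (br (fun l => (N (z l)).1),
          ∑ i : Fin (m + 2), ((-1 : K) ^ (m + (i : ℕ) + 1)) •
            (ρ (fun j => (N (z (i.succAbove j))).1)) ((N (z i)).2)) := rfl
    rw [this]
    congr 1
    rw [Finset.sum_eq_zero]
    intro i _
    rw [hNapp]
    simp
  constructor
  · rintro ⟨h1, h2⟩
    constructor
    · intro a
      rw [hφapp, hNapp, hNapp, hφapp]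
      exact Prod.ext (h1 a.2) (by simp)
    · intro z
      rw [key z, hbrN z]
      exact Prod.ext (h2 (fun l => (z l).2)) rfl
  · rintro ⟨h1, h2⟩
    constructor
    · intro v
      have := h1 ((0 : g), v)
      rw [hφapp, hNapp, hNapp, hφapp] at this
      exact congrArg Prod.fst this
    · intro v
      have := h2 (fun l => ((0 : g), v l))
      rw [key, hbrN] at this
      exact congrArg Prod.fst this
end
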